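/- arXiv:1803.00351 — 5 statements merged into one kernel-verified Lean document; each statement's English description precedes it below -/
import Mathlib

section
/- An operator T: X → Y between Banach spaces is p-convergent (1 < p < ∞) if and only if for every operator S: ℓ_{p*} → X (where p* is the conjugate exponent of p), the composition T∘S is compact. -/
open Filter Topology Metric NormedSpace Bornology ENNReal

noncomputable section

section Defs
variable {X Y : Type*} [NormedAddCommGroup X] [NormedSpace ℝ X]
  [NormedAddCommGroup Y] [NormedSpace ℝ Y]

/-- A sequence `x` in `X` is weakly `p`-summable if `(f (x n))ₙ ∈ ℓ_p` for every
continuous linear functional `f`. -/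
def WeaklyPSummable (p : ℝ≥0∞) (x : ℕ → X) : Prop :=
  ∀ f : StrongDual ℝ X, Memℓp (fun n => f (x n)) p

/-- A sequence is norm null if its norms tend to `0`. -/
def NormNull (x : ℕ → X) : Prop :=
  Tendsto (fun n => ‖x n‖) atTop (𝓝 0)

/-- An operator is `p`-convergent if it maps weakly `p`-summable sequences to norm
null sequences. -/
def PConvergent (p : ℝ≥0∞) (T : X →L[ℝ] Y) : Prop :=
  ∀ x : ℕ → X, WeaklyPSummable p x → NormNull fun n => T (x n)

/-- The adjoint (dual) operator `T* : Y* → X*`, `g ↦ g ∘ T`. -/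
def adjOp (T : X →L[ℝ] Y) : StrongDual ℝ Y →L[ℝ] StrongDual ℝ X :=
  (ContinuousLinearMap.compL ℝ X Y ℝ).flip T

/-- Weak convergence of a sequence to a point. -/
def WeaklyConvTo (x : ℕ → X) (a : X) : Prop :=
  ∀ f : StrongDual ℝ X, Tendsto (fun n => f (x n)) atTop (𝓝 (f a))

/-- A sequence is weakly Cauchy if `(f (x n))` converges for every functional `f`. -/
def WeaklyCauchySeq (x : ℕ → X) : Prop :=
  ∀ f : StrongDual ℝ X, ∃ l : ℝ, Tendsto (fun n => f (x n)) atTop (𝓝 l)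

/-- A set is relatively weakly compact iff every sequence in it has a subsequence
weakly convergent to a point of the space (sequential form, by Eberlein–Šmulian). -/
def RelWeaklyCompact (A : Set X) : Prop :=
  ∀ x : ℕ → X, (∀ n, x n ∈ A) →
    ∃ (a : X) (φ : ℕ → ℕ), StrictMono φ ∧ WeaklyConvTo (fun k => x (φ k)) a

/-- A set is weakly precompact if every sequence in it has a weakly Cauchy subsequence. -/
def WeaklyPrecompact (A : Set X) : Prop :=
  ∀ x : ℕ → X, (∀ n, x n ∈ A) →
    ∃ φ : ℕ → ℕ, StrictMono φ ∧ WeaklyCauchySeq (fun k => x (φ k))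

/-- A weakly compact operator: the image of the closed unit ball is relatively
weakly compact. -/
def WeaklyCompactOp (T : X →L[ℝ] Y) : Prop :=
  RelWeaklyCompact (⇑T '' closedBall 0 1)

/-- A weakly precompact operator: the image of the closed unit ball is weakly
precompact. -/
def WeaklyPrecompactOp (T : X →L[ℝ] Y) : Prop :=
  WeaklyPrecompact (⇑T '' closedBall 0 1)

/-- `g n → 0` uniformly on `A`. -/
def UnifNullOn (g : ℕ → X → ℝ) (A : Set X) : Prop :=
  ∀ ε > (0 : ℝ), ∃ N, ∀ n ≥ N, ∀ a ∈ A, |g n a| ≤ ε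

/-- A weakly-`p`-Dunford-Pettis subset of `X`: bounded, and every weakly `p`-summable
sequence in `X*` tends to `0` uniformly on it. -/
def WeaklyPDP (p : ℝ≥0∞) (A : Set X) : Prop :=
  IsBounded A ∧
    ∀ f : ℕ → StrongDual ℝ X, WeaklyPSummable p f → UnifNullOn (fun n a => f n a) A

/-- A weakly-`p`-L-subset of `X*`: bounded, and every weakly `p`-summable sequence
in `X` tends to `0` uniformly on it. -/
def WeaklyPLSet (p : ℝ≥0∞) (A : Set (StrongDual ℝ X)) : Prop :=
  IsBounded A ∧
    ∀ x : ℕ → X, WeaklyPSummable p x → UnifNullOn (fun n g => g (x n)) A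

/-- A weakly-`p`-Cauchy sequence. -/
def WeaklyPCauchy (p : ℝ≥0∞) (x : ℕ → X) : Prop :=
  ∀ φ ψ : ℕ → ℕ, StrictMono φ → StrictMono ψ →
    WeaklyPSummable p fun k => x (φ k) - x (ψ k)

/-- A weakly-`p`-precompact set: every sequence in it has a weakly-`p`-Cauchy
subsequence. -/
def WeaklyPPrecompact (p : ℝ≥0∞) (A : Set X) : Prop :=
  ∀ x : ℕ → X, (∀ n, x n ∈ A) →
    ∃ φ : ℕ → ℕ, StrictMono φ ∧ WeaklyPCauchy p fun k => x (φ k)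

/-- A weakly-`p`-precompact operator. -/
def WeaklyPPrecompactOp (p : ℝ≥0∞) (T : X →L[ℝ] Y) : Prop :=
  WeaklyPPrecompact p (⇑T '' closedBall 0 1)

/-- A `w*`-null sequence of functionals. -/
def WStarNull (f : ℕ → StrongDual ℝ X) : Prop :=
  ∀ x : X, Tendsto (fun n => f n x) atTop (𝓝 0)

/-- A limited subset of `X`: every `w*`-null sequence in `X*` tends to `0`
uniformly on it. -/
def LimitedSet (A : Set X) : Prop :=
  ∀ f : ℕ → StrongDual ℝ X, WStarNull f → UnifNullOn (fun n a => f n a) A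

/-- A weakly unconditionally convergent (wuc) series. -/
def WUC (x : ℕ → X) : Prop :=
  ∀ f : StrongDual ℝ X, Summable fun n => |f (x n)|

/-- An unconditionally converging operator: maps wuc series to unconditionally
convergent series. -/
def UncondConverging (T : X →L[ℝ] Y) : Prop :=
  ∀ x : ℕ → X, WUC x → Summable fun n => T (x n)

/-- A `V*`-subset of `X`. -/
def VStarSet (A : Set X) : Prop :=
  IsBounded A ∧ ∀ f : ℕ → StrongDual ℝ X, WUC f → UnifNullOn (fun n a => f n a) A

/-- `w*`-to-`w` continuity of an operator `T : X* → Y`, in the equivalent algebraic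
form: for every `g ∈ Y*` the functional `g ∘ T` on `X*` is given by evaluation at
a point of `X`. -/
def WStarToWCont (T : StrongDual ℝ X →L[ℝ] Y) : Prop :=
  ∀ g : StrongDual ℝ Y, ∃ x : X, ∀ f : StrongDual ℝ X, g (T f) = f x

end Defs

section SpaceProps
variable (p : ℝ≥0∞) (X : Type*) [NormedAddCommGroup X] [NormedSpace ℝ X]

/-- The Gelfand-Phillips property: every limited subset is relatively compact. -/
def GPspace : Prop :=
  ∀ A : Set X, Bornology.IsBounded A → LimitedSet A → IsCompact (closure A)

/-- The `p`-Gelfand-Phillips property: every limited weakly `p`-summable sequence is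
norm null. -/
def pGP : Prop :=
  ∀ x : ℕ → X, LimitedSet (Set.range x) → WeaklyPSummable p x → NormNull x

/-- Property `RDP_p`: every weakly-`p`-L-subset of `X*` is relatively weakly compact. -/
def RDPp : Prop :=
  ∀ A : Set (StrongDual ℝ X), WeaklyPLSet p A → RelWeaklyCompact A

/-- The Schur property. -/
def SchurSpace : Prop :=
  ∀ (x : ℕ → X) (a : X), WeaklyConvTo x a → Tendsto x atTop (𝓝 a)

/-- Weak sequential completeness. -/
def WeaklySeqComplete : Prop :=
  ∀ x : ℕ → X, WeaklyCauchySeq x → ∃ a : X, WeaklyConvTo x a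

/-- Pełczyński's property (V). -/
def PropertyV : Prop :=
  ∀ (Y : Type) [NormedAddCommGroup Y] [NormedSpace ℝ Y] [CompleteSpace Y],
    ∀ T : X →L[ℝ] Y, UncondConverging T → WeaklyCompactOp T

/-- Property (V*). -/
def PropertyVStar : Prop :=
  ∀ A : Set X, VStarSet A → RelWeaklyCompact A

/-- Reflexivity of a normed space: the canonical embedding into the double dual is
surjective. -/
def ReflexiveSpace : Prop :=
  Function.Surjective (NormedSpace.inclusionInDoubleDual ℝ X)

end SpaceProps

section Embeds
/-- `Z` embeds isomorphically into `W`. -/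
def EmbedsIn (Z W : Type*) [NormedAddCommGroup Z] [NormedSpace ℝ Z]
    [NormedAddCommGroup W] [NormedSpace ℝ W] : Prop :=
  ∃ f : Z →L[ℝ] W, ∃ c > (0 : ℝ), ∀ z : Z, c * ‖z‖ ≤ ‖f z‖

end Embeds

/-
Operators `S : ℓ_{p*} → X` correspond to weakly `p`-summable sequences via `S ↦ (S eₙ)`.
If every `T ∘ S` is compact, apply this to the `S` with `S eₙ = xₙ` for a weakly `p`-summable
`(xₙ)`: then `(T xₙ)` is relatively compact and weakly null, hence norm null.
Conversely, if `T` is `p`-convergent, `T ∘ S` is the operator-norm limit of the finite-rank maps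
`T ∘ S ∘ Pₙ`, `Pₙ` the truncation to the first `n` coordinates: otherwise a sliding hump yields
disjointly supported blocks `bₖ` in the unit ball of `ℓ_{p*}` with `‖T S bₖ‖` bounded below,
whereas such blocks are weakly `p`-summable by Hölder duality, so that `T S bₖ → 0`.
-/

local notation "ℓ[" q "]" => lp (fun _ : ℕ => ℝ) q

namespace WeaklyPSummable

variable {X Y : Type*} [NormedAddCommGroup X] [NormedSpace ℝ X]
  [NormedAddCommGroup Y] [NormedSpace ℝ Y] {p : ℝ≥0∞} {x : ℕ → X}

lemma map (hx : WeaklyPSummable p x) (T : X →L[ℝ] Y) : WeaklyPSummable p fun n => T (x n) :=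
  fun f => hx (f.comp T)

lemma tendsto_apply_zero (hx : WeaklyPSummable p x) (hp : 0 < p.toReal) (f : StrongDual ℝ X) :
    Tendsto (fun n => f (x n)) atTop (𝓝 0) := by
  have hpow : Tendsto (fun n => ‖f (x n)‖ ^ p.toReal) atTop (𝓝 0) :=
    ((hx f).summable hp).tendsto_atTop_zero
  have hroot := hpow.rpow_const (p := p.toReal⁻¹) (Or.inr (inv_nonneg.2 hp.le))
  rw [Real.zero_rpow (inv_ne_zero hp.ne')] at hroot
  refine tendsto_zero_iff_norm_tendsto_zero.2 (hroot.congr fun n => ?_)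
  rw [← Real.rpow_mul (norm_nonneg _), mul_inv_cancel₀ hp.ne', Real.rpow_one]

variable [Fact (1 ≤ p)]

def coeffCLM (hx : WeaklyPSummable p x) : StrongDual ℝ X →L[ℝ] ℓ[p] :=
  ContinuousLinearMap.ofSeqClosedGraph
    (g := { toFun := fun f => ⟨fun n => f (x n), hx f⟩
            map_add' := fun _ _ => rfl
            map_smul' := fun _ _ => rfl })
    fun u f z hu hz => by
      ext n
      exact tendsto_nhds_unique (((lp.evalCLM ℝ _ p n).continuous.tendsto z).comp hz)
        (((ContinuousLinearMap.apply ℝ ℝ (x n)).continuous.tendsto f).comp hu)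

@[simp]
lemma coeffCLM_apply (hx : WeaklyPSummable p x) (f : StrongDual ℝ X) (n : ℕ) :
    hx.coeffCLM f n = f (x n) := rfl

variable {q : ℝ≥0∞} [Fact (1 ≤ q)]

lemma norm_sum_smul_le (hx : WeaklyPSummable p x) (hpq : p.toReal.HolderConjugate q.toReal)
    (a : ℕ → ℝ) (t : Finset ℕ) :
    ‖∑ k ∈ t, a k • x k‖ ≤ ‖hx.coeffCLM‖ * ‖∑ k ∈ t, lp.single q k (a k)‖ := by
  set v := ∑ k ∈ t, lp.single q k (a k)
  have hv : ∀ k ∈ t, v k = a k := fun k hk => by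
    rw [lp.coeFn_sum, Finset.sum_apply]
    simp [lp.single_apply, Pi.single_apply, hk]
  refine NormedSpace.norm_le_dual_bound ℝ _ (by positivity) fun f => ?_
  calc ‖f (∑ k ∈ t, a k • x k)‖ = ‖∑ k ∈ t, hx.coeffCLM f k * v k‖ := by
        simp only [map_sum, map_smul, smul_eq_mul, coeffCLM_apply]
        exact congrArg _ (Finset.sum_congr rfl fun k hk => by rw [hv k hk, mul_comm])
    _ ≤ ∑ k ∈ t, ‖hx.coeffCLM f k‖ * ‖v k‖ := by
        simpa only [norm_mul] using norm_sum_le t fun k => hx.coeffCLM f k * v k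
    _ ≤ ∑' k, ‖hx.coeffCLM f k‖ * ‖v k‖ :=
        Summable.sum_le_tsum t (fun _ _ => by positivity) (lp.summable_mul hpq _ _)
    _ ≤ ‖hx.coeffCLM f‖ * ‖v‖ := lp.tsum_mul_le_mul_norm' hpq _ _
    _ ≤ ‖hx.coeffCLM‖ * ‖v‖ * ‖f‖ := by
        rw [mul_right_comm]
        gcongr
        exact hx.coeffCLM.le_opNorm f

variable [CompleteSpace X]

lemma summable_smul (hx : WeaklyPSummable p x) (hpq : p.toReal.HolderConjugate q.toReal)
    (hq : q ≠ ⊤) (a : ℓ[q]) : Summable fun k => a k • x k := by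
  set C := ‖hx.coeffCLM‖
  rw [summable_iff_vanishing_norm]
  intro ε hε
  obtain ⟨s, hs⟩ := summable_iff_vanishing_norm.1 (lp.hasSum_single hq a).summable
    (ε / (C + 1)) (by positivity)
  refine ⟨s, fun t ht => (hx.norm_sum_smul_le hpq a t).trans_lt ?_⟩
  calc C * ‖∑ k ∈ t, lp.single q k (a k)‖ ≤ C * (ε / (C + 1)) := by gcongr; exact (hs t ht).le
    _ < ε := by
        rw [mul_div_assoc', div_lt_iff₀ (by positivity)]
        nlinarith

lemma exists_clm_apply_single (hx : WeaklyPSummable p x)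
    (hpq : p.toReal.HolderConjugate q.toReal) (hq : q ≠ ⊤) :
    ∃ S : ℓ[q] →L[ℝ] X, ∀ k, S (lp.single q k 1) = x k := by
  let partialSum (n : ℕ) : ℓ[q] →L[ℝ] X :=
    ∑ k ∈ Finset.range n, (lp.evalCLM ℝ (fun _ : ℕ => ℝ) q k).smulRight (x k)
  have hlim : Tendsto (fun n a => partialSum n a) atTop (𝓝 fun a => ∑' k, a k • x k) :=
    tendsto_pi_nhds.2 fun a => by
      simpa [partialSum, lp.evalCLM] using (hx.summable_smul hpq hq a).hasSum.tendsto_sum_nat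
  refine ⟨continuousLinearMapOfTendsto partialSum hlim, fun k => ?_⟩
  simp [continuousLinearMapOfTendsto, Pi.single_apply, ite_smul]

end WeaklyPSummable

lemma norm_sum_rpow_le_of_pairwise {ι E : Type*} [SeminormedAddCommGroup E] {r : ℝ} (hr : 0 < r)
    (s : Finset ι) (f : ι → E) (h : Pairwise fun k l => f k = 0 ∨ f l = 0) :
    ‖∑ k ∈ s, f k‖ ^ r ≤ ∑ k ∈ s, ‖f k‖ ^ r := by
  by_cases hs : ∃ k ∈ s, f k ≠ 0
  · obtain ⟨k, hk, hfk⟩ := hs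
    rw [Finset.sum_eq_single_of_mem k hk fun l _ hlk => (h hlk).resolve_right hfk]
    exact Finset.single_le_sum (f := fun k => ‖f k‖ ^ r) (fun _ _ => by positivity) hk
  · push Not at hs
    rw [Finset.sum_eq_zero hs, norm_zero, Real.zero_rpow hr.ne']
    positivity

section DisjointSupport

variable {q : ℝ≥0∞} [Fact (1 ≤ q)] {b : ℕ → ℓ[q]}

lemma norm_sum_smul_le_one_of_pairwise (hq : 0 < q.toReal) (hb : ∀ k, ‖b k‖ ≤ 1)
    (hdisj : Pairwise fun k l => ∀ j, b k j = 0 ∨ b l j = 0) (s : Finset ℕ) {c : ℕ → ℝ}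
    (hc : ∑ k ∈ s, ‖c k‖ ^ q.toReal ≤ 1) : ‖∑ k ∈ s, c k • b k‖ ≤ 1 := by
  refine lp.norm_le_of_forall_sum_le hq zero_le_one fun u => ?_
  rw [Real.one_rpow]
  calc ∑ j ∈ u, ‖(∑ k ∈ s, c k • b k : ℓ[q]) j‖ ^ q.toReal
      ≤ ∑ j ∈ u, ∑ k ∈ s, ‖c k * b k j‖ ^ q.toReal := by
        gcongr with j
        rw [lp.coeFn_sum, Finset.sum_apply]
        exact norm_sum_rpow_le_of_pairwise hq s _ fun k l hkl =>
          (hdisj hkl j).imp (fun h => by simp [h]) fun h => by simp [h]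
    _ = ∑ k ∈ s, ‖c k‖ ^ q.toReal * ∑ j ∈ u, ‖b k j‖ ^ q.toReal := by
        rw [Finset.sum_comm]
        simp only [norm_mul, Real.mul_rpow (norm_nonneg _) (norm_nonneg _), Finset.mul_sum]
    _ ≤ ∑ k ∈ s, ‖c k‖ ^ q.toReal * 1 := by
        gcongr with k
        exact (lp.sum_rpow_le_norm_rpow hq (b k) u).trans
          (Real.rpow_le_one (norm_nonneg _) (hb k) hq.le)
    _ ≤ 1 := by simpa using hc

lemma weaklyPSummable_of_pairwise {p : ℝ≥0∞} (hpq : p.toReal.HolderConjugate q.toReal)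
    (hb : ∀ k, ‖b k‖ ≤ 1) (hdisj : Pairwise fun k l => ∀ j, b k j = 0 ∨ b l j = 0) :
    WeaklyPSummable p b := by
  intro g
  refine memℓp_gen' (C := ‖g‖ ^ p.toReal) fun s => ?_
  -- `w` is extremal in Hölder's inequality; with signs it makes `g (∑ c k • b k)` equal to
  -- the `ℓ_p`-norm of `(g (b k))_{k ∈ s}`.
  obtain ⟨w, hw, hwg⟩ := (NNReal.isGreatest_Lp s (fun k => ‖g (b k)‖₊) hpq).1
  set c : ℕ → ℝ := fun k => SignType.sign (g (b k)) * w k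
  have hc : ∑ k ∈ s, ‖c k‖ ^ q.toReal ≤ 1 :=
    calc ∑ k ∈ s, ‖c k‖ ^ q.toReal ≤ ∑ k ∈ s, (w k : ℝ) ^ q.toReal := by
          gcongr with k
          rw [norm_mul, NNReal.norm_eq]
          exact mul_le_of_le_one_left (w k).2 (by cases SignType.sign (g (b k)) <;> simp)
      _ ≤ 1 := by exact_mod_cast hw
  have hnorm : (∑ k ∈ s, ‖g (b k)‖ ^ p.toReal) ^ p.toReal⁻¹ ≤ ‖g‖ :=
    calc (∑ k ∈ s, ‖g (b k)‖ ^ p.toReal) ^ p.toReal⁻¹ = ∑ k ∈ s, ‖g (b k)‖ * w k := by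
          rw [← inv_eq_one_div] at hwg
          have := congrArg NNReal.toReal hwg
          push_cast at this
          exact this.symm
      _ = g (∑ k ∈ s, c k • b k) := by
          simp [c, map_sum, mul_comm, mul_left_comm]
      _ ≤ ‖g‖ * ‖∑ k ∈ s, c k • b k‖ := (le_abs_self _).trans (g.le_opNorm _)
      _ ≤ ‖g‖ := mul_le_of_le_one_right (norm_nonneg _)
          (norm_sum_smul_le_one_of_pairwise hpq.symm.pos hb hdisj s hc)
  rwa [Real.rpow_inv_le_iff_of_pos (by positivity) (norm_nonneg _) hpq.pos] at hnorm

end DisjointSupport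

section Truncation

variable {Y : Type*} [NormedAddCommGroup Y] [NormedSpace ℝ Y] {q : ℝ≥0∞} [Fact (1 ≤ q)]

variable (q) in
def truncation (n : ℕ) : ℓ[q] →L[ℝ] ℓ[q] :=
  ∑ i ∈ Finset.range n,
    (lp.singleContinuousLinearMap ℝ (fun _ => ℝ) q i).comp (lp.evalCLM ℝ (fun _ => ℝ) q i)

lemma truncation_apply (n : ℕ) (a : ℓ[q]) (j : ℕ) :
    truncation q n a j = if j < n then a j else 0 := by
  simp only [truncation, FunLike.coe_sum, Finset.sum_apply,
    ContinuousLinearMap.comp_apply, lp.singleContinuousLinearMap_apply]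
  rw [lp.coeFn_sum, Finset.sum_apply]
  simp [lp.evalCLM, Pi.single_apply]

lemma tendsto_truncation (hq : q ≠ ⊤) (a : ℓ[q]) :
    Tendsto (fun n => truncation q n a) atTop (𝓝 a) := by
  simpa [truncation, lp.evalCLM] using (lp.hasSum_single hq a).tendsto_sum_nat

lemma isCompactOperator_comp_truncation (U : ℓ[q] →L[ℝ] Y) (n : ℕ) :
    IsCompactOperator (U.comp (truncation q n)) := by
  rw [truncation, ContinuousLinearMap.comp_finsetSum]
  refine Submodule.sum_mem (compactOperator (RingHom.id ℝ) ℓ[q] Y) fun i _ => ?_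
  exact (isCompactOperator_of_locallyCompactSpace_dom (lp.evalCLM ℝ _ q i)).clm_comp
    (U.comp (lp.singleContinuousLinearMap ℝ _ q i))

end Truncation

section SlidingHump

variable {Y : Type*} [NormedAddCommGroup Y] [NormedSpace ℝ Y] {q : ℝ≥0∞}

lemma exists_pairwise_disjoint_seq {P : ℓ[q] → Prop}
    (h : ∀ N, ∃ M, ∃ b, P b ∧ ∀ j, j < N ∨ M ≤ j → b j = 0) :
    ∃ b : ℕ → ℓ[q], (∀ k, P (b k)) ∧ Pairwise fun k l => ∀ j, b k j = 0 ∨ b l j = 0 := by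
  choose M b hP hb using h
  let m : ℕ → ℕ := fun k => Nat.rec (motive := fun _ => ℕ) 0 (fun _ n => max n (M n)) k
  have hm_succ : ∀ k, m (k + 1) = max (m k) (M (m k)) := fun _ => rfl
  have hm : Monotone m := monotone_nat_of_le_succ fun k => (hm_succ k).symm ▸ le_max_left _ _
  have key : ∀ k l, k < l → ∀ j, b (m k) j = 0 ∨ b (m l) j = 0 := by
    intro k l hkl j
    by_cases hj : j < m l
    · exact Or.inr (hb _ j (Or.inl hj))
    · refine Or.inl (hb _ j (Or.inr ?_))
      calc M (m k) ≤ m (k + 1) := (hm_succ k).symm ▸ le_max_right _ _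
        _ ≤ m l := hm hkl
        _ ≤ j := not_lt.1 hj
  exact ⟨fun k => b (m k), fun k => hP _,
    fun k l hkl => hkl.lt_or_gt.elim (key k l) fun h j => (key l k h j).symm⟩

variable [Fact (1 ≤ q)]

lemma exists_block_of_lt_norm (hq : q ≠ ⊤) (U : ℓ[q] →L[ℝ] Y) {ε : ℝ} {n : ℕ}
    (h : ε < ‖U.comp (truncation q n) - U‖) :
    ∃ M, ∃ b : ℓ[q], (‖b‖ ≤ 1 ∧ ε < ‖U b‖) ∧ ∀ j, j < n ∨ M ≤ j → b j = 0 := by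
  obtain ⟨a, ha, hUa⟩ := ContinuousLinearMap.exists_lt_apply_of_lt_opNorm _ h
  set c := a - truncation q n a
  have hc : ε < ‖U c‖ := by
    rwa [sub_apply, ContinuousLinearMap.comp_apply, norm_sub_rev, ← map_sub] at hUa
  obtain ⟨M, hM⟩ := (((U.continuous.tendsto c).comp (tendsto_truncation hq c)).norm.eventually
    (lt_mem_nhds hc)).exists
  have hcoord : ∀ j, truncation q M c j = if j < n ∨ M ≤ j then 0 else a j := by
    intro j
    simp only [truncation_apply, c, lp.coeFn_sub, Pi.sub_apply]
    split_ifs <;> first | (exfalso; omega) | simp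
  refine ⟨M, truncation q M c, ⟨?_, hM⟩, fun j hj => by rw [hcoord, if_pos hj]⟩
  refine (lp.norm_mono (zero_lt_one.trans_le Fact.out).ne' fun j => ?_).trans ha.le
  rw [hcoord]
  split_ifs <;> simp

end SlidingHump

section
variable {X Y : Type*} [NormedAddCommGroup X] [NormedSpace ℝ X]
  [NormedAddCommGroup Y] [NormedSpace ℝ Y] {p q : ℝ≥0∞} [Fact (1 ≤ q)]

lemma tendsto_comp_truncation (hq : q ≠ ⊤) (U : ℓ[q] →L[ℝ] Y)
    (hU : ∀ b : ℕ → ℓ[q], (∀ k, ‖b k‖ ≤ 1) → (Pairwise fun k l => ∀ j, b k j = 0 ∨ b l j = 0) →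
      Tendsto (fun k => U (b k)) atTop (𝓝 0)) :
    Tendsto (fun n => U.comp (truncation q n)) atTop (𝓝 U) := by
  rw [← tendsto_sub_nhds_zero_iff, NormedAddGroup.tendsto_nhds_zero]
  intro ε hε
  by_contra hfreq
  simp only [not_eventually, not_lt] at hfreq
  obtain ⟨b, hb, hdisj⟩ := exists_pairwise_disjoint_seq
    (P := fun b => ‖b‖ ≤ 1 ∧ ε / 2 < ‖U b‖) fun N => by
      obtain ⟨n, hNn, hn⟩ := frequently_atTop.1 hfreq N
      obtain ⟨M, b, hb, hsupp⟩ := exists_block_of_lt_norm hq U ((half_lt_self hε).trans_le hn)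
      exact ⟨M, b, hb, fun j hj => hsupp j (hj.imp_left fun h => h.trans_le hNn)⟩
  obtain ⟨k, hk⟩ := ((hU b (fun k => (hb k).1) hdisj).norm.eventually
    (eventually_lt_nhds (by simpa using half_pos hε : ‖(0 : Y)‖ < ε / 2))).exists
  exact (hb k).2.not_gt hk

theorem PConvergent.isCompactOperator_comp [CompleteSpace Y]
    (hpq : p.toReal.HolderConjugate q.toReal) (hq : q ≠ ⊤) {T : X →L[ℝ] Y}
    (hT : PConvergent p T) (S : ℓ[q] →L[ℝ] X) : IsCompactOperator (T.comp S) :=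
  isCompactOperator_of_tendsto
    (tendsto_comp_truncation hq _ fun _ hb hdisj => tendsto_zero_iff_norm_tendsto_zero.2 <|
      hT _ ((weaklyPSummable_of_pairwise hpq hb hdisj).map S))
    (Eventually.of_forall (isCompactOperator_comp_truncation _))

theorem pConvergent_of_isCompactOperator_comp [CompleteSpace X] [Fact (1 ≤ p)]
    (hpq : p.toReal.HolderConjugate q.toReal) (hq : q ≠ ⊤) {T : X →L[ℝ] Y}
    (hT : ∀ S : ℓ[q] →L[ℝ] X, IsCompactOperator (T.comp S)) : PConvergent p T := by
  intro x hx
  obtain ⟨S, hS⟩ := hx.exists_clm_apply_single hpq hq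
  obtain ⟨K, hK, hTSK⟩ := (hT S).image_closedBall_subset_compact 1
  have hmem : ∀ n, T (x n) ∈ K := fun n =>
    hTSK ⟨lp.single q n 1, mem_closedBall_zero_iff.2
      (by rw [lp.norm_single (zero_lt_one.trans_le Fact.out), norm_one]), by simp [hS]⟩
  refine tendsto_zero_iff_norm_tendsto_zero.1 (hK.tendsto_nhds_of_unique_mapClusterPt
    (Eventually.of_forall hmem) fun z _ hz => ?_)
  refine SeparatingDual.eq_zero_of_forall_dual_eq_zero (R := ℝ) fun f => ?_
  exact eq_of_nhds_neBot <| ClusterPt.mono (hz.tendsto_comp (f.continuous.tendsto z))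
    ((hx.map T).tendsto_apply_zero hpq.pos f)

end

/-- For `1 < p < ∞` with conjugate exponent `q`, an operator `T : X → Y`
between Banach spaces is `p`-convergent iff `T ∘ S` is compact for every operator
`S : ℓ_q → X`. -/
theorem stmt_0 {X Y : Type*} [NormedAddCommGroup X] [NormedSpace ℝ X] [CompleteSpace X]
    [NormedAddCommGroup Y] [NormedSpace ℝ Y] [CompleteSpace Y]
    (p q : ℝ≥0∞) (hp : 1 < p) (hp' : p ≠ ⊤) [Fact (1 ≤ q)] (hpq : p⁻¹ + q⁻¹ = 1)
    (T : X →L[ℝ] Y) :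
    PConvergent p T ↔
      ∀ S : lp (fun _ : ℕ => ℝ) q →L[ℝ] X, IsCompactOperator (T.comp S) := by
  have : Fact (1 ≤ p) := ⟨hp.le⟩
  have : p.HolderConjugate q := ENNReal.holderConjugate_iff.2 hpq
  have hpq' : p.toReal.HolderConjugate q.toReal := ENNReal.HolderConjugate.toReal <| by
    simpa using (ENNReal.toReal_lt_toReal ENNReal.one_ne_top hp').2 hp
  have hq : q ≠ ⊤ := ((ENNReal.HolderConjugate.lt_top_iff_one_lt q p).2 hp).ne
  exact ⟨fun hT S => hT.isCompactOperator_comp hpq' hq S,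
    pConvergent_of_isCompactOperator_comp hpq' hq⟩
end
end

section
/- Let 1 ≤ p < ∞ and let T: Y → X be an operator between Banach spaces. Then T(B_Y) is a weakly-p-Dunford-Pettis subset of X if and only if the adjoint T*: X* → Y* is p-convergent. -/
open Filter Topology Metric NormedSpace Bornology ENNReal

noncomputable section

/-! Since `‖T* f‖ = sup_{y ∈ B_Y} |f (T y)|`, a sequence `(fₙ)` in `X*` tends to `0`
uniformly on `T(B_Y)` exactly when `T* fₙ → 0` in norm; and `T(B_Y)` is always bounded. -/

theorem ContinuousLinearMap.opNorm_le_iff_forall_mem_closedBall {E F : Type*}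
    [NormedAddCommGroup E] [NormedSpace ℝ E] [NormedAddCommGroup F] [NormedSpace ℝ F]
    {f : E →L[ℝ] F} {C : ℝ} (hC : 0 ≤ C) :
    ‖f‖ ≤ C ↔ ∀ x ∈ closedBall (0 : E) 1, ‖f x‖ ≤ C :=
  ⟨fun hf x hx => (f.unit_le_opNorm x (mem_closedBall_zero_iff.1 hx)).trans hf,
    fun hf => f.opNorm_le_of_unit_norm hC fun x hx => hf x (mem_closedBall_zero_iff.2 hx.le)⟩

theorem unifNullOn_image_iff {α β : Type*} {g : ℕ → α → ℝ} {A : Set β} (T : β → α) :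
    UnifNullOn g (T '' A) ↔ UnifNullOn (fun n y => g n (T y)) A := by
  simp only [UnifNullOn, Set.forall_mem_image]

theorem normNull_iff_unifNullOn_closedBall {Y : Type*} [NormedAddCommGroup Y] [NormedSpace ℝ Y]
    (f : ℕ → StrongDual ℝ Y) :
    NormNull f ↔ UnifNullOn (fun n y => f n y) (closedBall 0 1) := by
  simp only [NormNull, atTop_basis.tendsto_iff nhds_basis_closedBall, UnifNullOn,
    mem_closedBall, dist_zero_right, norm_norm, Set.mem_Ici, true_and, ← Real.norm_eq_abs]
  refine forall₂_congr fun ε hε => exists_congr fun N => forall₂_congr fun n _ => ?_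
  simpa only [mem_closedBall_zero_iff] using (f n).opNorm_le_iff_forall_mem_closedBall hε.le

theorem adjOp_apply {X Y : Type*} [NormedAddCommGroup X] [NormedSpace ℝ X]
    [NormedAddCommGroup Y] [NormedSpace ℝ Y] (T : Y →L[ℝ] X) (f : StrongDual ℝ X) (y : Y) :
    adjOp T f y = f (T y) :=
  rfl

theorem stmt_2_general {X Y : Type*} [NormedAddCommGroup X] [NormedSpace ℝ X]
    [NormedAddCommGroup Y] [NormedSpace ℝ Y]
    (p : ℝ≥0∞) (T : Y →L[ℝ] X) :
    WeaklyPDP p (⇑T '' closedBall 0 1) ↔ PConvergent p (adjOp T) := by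
  have h_unifNull_iff (f : ℕ → StrongDual ℝ X) :
      UnifNullOn (fun n a => f n a) (⇑T '' closedBall 0 1) ↔
        NormNull fun n => adjOp T (f n) := by
    simp only [unifNullOn_image_iff, normNull_iff_unifNullOn_closedBall, adjOp_apply]
  have h_bounded : IsBounded (⇑T '' closedBall 0 1) :=
    T.lipschitz.isBounded_image isBounded_closedBall
  simp only [WeaklyPDP, PConvergent, h_unifNull_iff, h_bounded, true_and]

/-- For `1 ≤ p < ∞` and an operator `T : Y → X` between Banach spaces,
`T(B_Y)` is a weakly-`p`-Dunford-Pettis subset of `X` iff `T* : X* → Y*` is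
`p`-convergent. -/
theorem stmt_2 {X Y : Type*} [NormedAddCommGroup X] [NormedSpace ℝ X] [CompleteSpace X]
    [NormedAddCommGroup Y] [NormedSpace ℝ Y] [CompleteSpace Y]
    (p : ℝ≥0∞) (hp : 1 ≤ p) (hp' : p ≠ ⊤) (T : Y →L[ℝ] X) :
    WeaklyPDP p (⇑T '' closedBall 0 1) ↔ PConvergent p (adjOp T) :=
  stmt_2_general p T
end
end

section
/- Let 1 ≤ p < ∞. A Banach space X has the property that every weakly-p-L-subset of X* is relatively weakly compact (i.e., X has property RDP_p) if and only if for every Banach space Y, every p-convergent operator T: X → Y has weakly compact adjoint (equivalently, is weakly compact). Moreover it suffices to test with Y = ℓ_∞. -/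
open Filter Topology Metric NormedSpace Bornology ENNReal

noncomputable section

section Embeds
/-! If `T` is `p`-convergent, `T*` maps the dual unit ball onto a weakly-`p`-L-set, so `RDP_p`
makes `T*` weakly compact. Conversely, a sequence `(fₙ)` in a weakly-`p`-L-set `A` is the image
`T* eₙ` of the coordinate functionals `eₙ` on `ℓ_∞` under the adjoint of `T x = (fₙ x)ₙ`, and `T`
is `p`-convergent precisely because `A` is a weakly-`p`-L-set; weak compactness of `T*` then
yields a weakly convergent subsequence of `(fₙ)`. -/

open scoped lp

theorem normNull_iff_forall_norm_le {X : Type*} [NormedAddCommGroup X] {x : ℕ → X} :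
    NormNull x ↔ ∀ ε > 0, ∃ N, ∀ n ≥ N, ‖x n‖ ≤ ε := by
  simp [NormNull, atTop_basis.tendsto_iff Metric.nhds_basis_closedBall]

section RDPp

variable {X Y : Type*} [NormedAddCommGroup X] [NormedSpace ℝ X]
  [NormedAddCommGroup Y] [NormedSpace ℝ Y] {p : ℝ≥0∞}

theorem PConvergent.weaklyPLSet_image_adjOp {T : X →L[ℝ] Y} (hT : PConvergent p T) :
    WeaklyPLSet p (adjOp T '' closedBall 0 1) := by
  refine ⟨(adjOp T).lipschitz.isBounded_image isBounded_closedBall, fun x hx ε hε => ?_⟩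
  obtain ⟨N, hN⟩ := normNull_iff_forall_norm_le.mp (hT x hx) ε hε
  refine ⟨N, fun n hn => ?_⟩
  rintro - ⟨g, hg, rfl⟩
  calc |g (T (x n))| ≤ ‖g‖ * ‖T (x n)‖ := g.le_opNorm _
    _ ≤ 1 * ε := mul_le_mul (mem_closedBall_zero_iff.mp hg) (hN n hn) (norm_nonneg _) zero_le_one
    _ = ε := one_mul ε

theorem RDPp.weaklyCompactOp_adjOp (hX : RDPp p X) {T : X →L[ℝ] Y} (hT : PConvergent p T) :
    WeaklyCompactOp (adjOp T) :=
  hX _ hT.weaklyPLSet_image_adjOp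

theorem norm_apply_le_of_forall_norm_le {f : ℕ → StrongDual ℝ X} {C : ℝ}
    (hf : ∀ n, ‖f n‖ ≤ C) (x : X) (n : ℕ) : ‖f n x‖ ≤ C * ‖x‖ :=
  ((f n).le_opNorm x).trans (mul_le_mul_of_nonneg_right (hf n) (norm_nonneg x))

def toLinfty (f : ℕ → StrongDual ℝ X) {C : ℝ} (hf : ∀ n, ‖f n‖ ≤ C) : X →L[ℝ] ℓ^∞(ℕ, ℝ) :=
  LinearMap.mkContinuous
    { toFun x := ⟨fun n => f n x, memℓp_infty ⟨C * ‖x‖, by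
        rintro - ⟨n, rfl⟩
        exact norm_apply_le_of_forall_norm_le hf x n⟩⟩
      map_add' x y := Subtype.ext <| funext fun n => map_add (f n) x y
      map_smul' c x := Subtype.ext <| funext fun n => map_smul (f n) c x }
    C fun x => lp.norm_le_of_forall_le' _ (norm_apply_le_of_forall_norm_le hf x)

theorem adjOp_toLinfty_evalCLM {f : ℕ → StrongDual ℝ X} {C : ℝ} (hf : ∀ n, ‖f n‖ ≤ C) (n : ℕ) :
    adjOp (toLinfty f hf) (lp.evalCLM ℝ (fun _ => ℝ) ∞ n) = f n :=
  rfl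

theorem norm_evalCLM_le (n : ℕ) : ‖lp.evalCLM ℝ (fun _ : ℕ => ℝ) ∞ n‖ ≤ 1 :=
  LinearMap.mkContinuous_norm_le _ zero_le_one _

theorem WeaklyPLSet.pConvergent_toLinfty {A : Set (StrongDual ℝ X)} (hA : WeaklyPLSet p A)
    {f : ℕ → StrongDual ℝ X} (hfA : ∀ n, f n ∈ A) {C : ℝ} (hf : ∀ n, ‖f n‖ ≤ C) :
    PConvergent p (toLinfty f hf) := by
  intro x hx
  refine normNull_iff_forall_norm_le.mpr fun ε hε => ?_
  obtain ⟨N, hN⟩ := hA.2 x hx ε hε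
  exact ⟨N, fun n hn => lp.norm_le_of_forall_le hε.le fun m => hN n hn (f m) (hfA m)⟩

theorem rdpp_of_forall_weaklyCompactOp_adjOp
    (h : ∀ T : X →L[ℝ] ℓ^∞(ℕ, ℝ), PConvergent p T → WeaklyCompactOp (adjOp T)) :
    RDPp p X := by
  intro A hA f hfA
  obtain ⟨C, hC⟩ := isBounded_iff_forall_norm_le.mp hA.1
  have hf : ∀ n, ‖f n‖ ≤ C := fun n => hC _ (hfA n)
  exact h _ (hA.pConvergent_toLinfty hfA hf) _ fun n =>
    ⟨_, mem_closedBall_zero_iff.mpr (norm_evalCLM_le n), adjOp_toLinfty_evalCLM hf n⟩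

end RDPp

theorem stmt_5_general {X : Type} [NormedAddCommGroup X] [NormedSpace ℝ X]
    (p : ℝ≥0∞) :
    (RDPp p X ↔
      (∀ (Y : Type) [NormedAddCommGroup Y] [NormedSpace ℝ Y] [CompleteSpace Y],
        ∀ T : X →L[ℝ] Y, PConvergent p T → WeaklyCompactOp (adjOp T))) ∧
    (RDPp p X ↔
      (∀ T : X →L[ℝ] lp (fun _ : ℕ => ℝ) ⊤,
        PConvergent p T → WeaklyCompactOp (adjOp T))) :=
  ⟨⟨fun hX _ _ _ _ _ hT => hX.weaklyCompactOp_adjOp hT,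
      fun h => rdpp_of_forall_weaklyCompactOp_adjOp (h _)⟩,
    ⟨fun hX _ hT => hX.weaklyCompactOp_adjOp hT, rdpp_of_forall_weaklyCompactOp_adjOp⟩⟩

/-- For `1 ≤ p < ∞`, `X` has property `RDP_p` (every weakly-`p`-L-subset
of `X*` is relatively weakly compact) iff for every Banach space `Y` every
`p`-convergent operator `T : X → Y` has weakly compact adjoint; moreover it suffices
to test with `Y = ℓ_∞`. -/
theorem stmt_5 {X : Type} [NormedAddCommGroup X] [NormedSpace ℝ X] [CompleteSpace X]
    (p : ℝ≥0∞) (hp : 1 ≤ p) (hp' : p ≠ ⊤) :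
    (RDPp p X ↔
      (∀ (Y : Type) [NormedAddCommGroup Y] [NormedSpace ℝ Y] [CompleteSpace Y],
        ∀ T : X →L[ℝ] Y, PConvergent p T → WeaklyCompactOp (adjOp T))) ∧
    (RDPp p X ↔
      (∀ T : X →L[ℝ] lp (fun _ : ℕ => ℝ) ⊤,
        PConvergent p T → WeaklyCompactOp (adjOp T))) :=
  stmt_5_general p
end Embeds
end
end

section
/- Let 2 < p < ∞. If T: Y → X is an operator between Banach spaces such that J∘T: Y → ℓ_p is compact for every operator J: X → ℓ_p, then T is weakly precompact (i.e., T(B_Y) is weakly precompact: every sequence in T(B_Y) has a weakly Cauchy subsequence). -/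
open Filter Topology Metric NormedSpace Bornology ENNReal

noncomputable section

/-! If `T (B_Y)` contained a sequence `x` without weakly Cauchy subsequence, Rosenthal's
dichotomy for the functions `f ↦ f (x n)` on the dual unit ball would give a subsequence and
levels `q < r` such that the pairs `{f (x n) < q}`, `{r < f (x n)}` are Boolean independent, so
that the subsequence is an `ℓ₁`-sequence. By Hahn–Banach every sign pattern on it is attained by
functionals `G` of uniformly bounded norm, and averaging the products `G u * G v` over all sign
patterns gives a bounded positive semidefinite form for which the `x i` are orthonormal. This
plays the role of the extension through Hilbert space of the 2-summing inclusion `ℓ₁ → ℓ₂`: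
it yields an operator `J : X → ℓ₂ ⊆ ℓ_p` with `J (x i) = e i`, and as `(e i)` has no convergent
subsequence, `J ∘ T` is not compact. -/

theorem exists_seq_of_forall_exists {σ : Type*} {P : σ → Prop} {R : ℕ → σ → σ → Prop}
    {s₀ : σ} (h₀ : P s₀) (h : ∀ n s, P s → ∃ s', P s' ∧ R n s s') :
    ∃ f : ℕ → σ, f 0 = s₀ ∧ ∀ n, P (f n) ∧ R n (f n) (f (n + 1)) := by
  choose g hgP hgR using h
  let f : ℕ → {s // P s} := fun n =>
    Nat.rec ⟨s₀, h₀⟩ (fun n s => ⟨g n s.1 s.2, hgP n s.1 s.2⟩) n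
  exact ⟨fun n => (f n).1, rfl, fun n => ⟨(f n).2, hgR n _ (f n).2⟩⟩

theorem exists_rat_frequently_lt_and_gt {a : ℕ → ℝ} (ha : ∃ C, ∀ n, |a n| ≤ C)
    (h : ¬∃ l, Tendsto a atTop (𝓝 l)) :
    ∃ q r : ℚ, q < r ∧ (∃ᶠ k in atTop, a k < q) ∧ ∃ᶠ k in atTop, (r : ℝ) < a k := by
  obtain ⟨C, hC⟩ := ha
  have hle : IsBoundedUnder (· ≤ ·) atTop a := isBoundedUnder_of ⟨C, fun n => (abs_le.1 (hC n)).2⟩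
  have hge : IsBoundedUnder (· ≥ ·) atTop a :=
    isBoundedUnder_of ⟨-C, fun n => (abs_le.1 (hC n)).1⟩
  have hlt : liminf a atTop < limsup a atTop := (liminf_le_limsup hle hge).lt_of_ne
    fun heq => h ⟨_, tendsto_of_liminf_eq_limsup heq rfl hle hge⟩
  obtain ⟨q, hq₁, hq₂⟩ := exists_rat_btwn hlt
  obtain ⟨r, hr₁, hr₂⟩ := exists_rat_btwn hq₂
  exact ⟨q, r, by exact_mod_cast hr₁, frequently_lt_of_liminf_lt hle.isCoboundedUnder_ge hq₁,
    frequently_lt_of_lt_limsup hge.isCoboundedUnder_le hr₂⟩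

namespace Rosenthal

open Set

variable {S : Type*} (A B : ℕ → Set S)

def side (b : Bool) (n : ℕ) : Set S := if b then B n else A n

def Tame (M : Set ℕ) (C : Set S) : Prop :=
  ∀ t ∈ C, {n | n ∈ M ∧ t ∈ A n}.Finite ∨ {n | n ∈ M ∧ t ∈ B n}.Finite

def Wild (M : Set ℕ) (C : Set S) : Prop :=
  ∀ M' ⊆ M, M'.Infinite → ¬Tame A B M' C

def Independent : Prop :=
  ∀ (k : ℕ) (v : ℕ → Bool), ∃ t, ∀ i < k, t ∈ side A B (v i) i

def split (𝒞 : Set (Set S)) (n : ℕ) : Set (Set S) :=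
  (fun p : Set S × Bool => p.1 ∩ side A B p.2 n) '' (𝒞 ×ˢ univ)

/-- The sets `⋂ i, side (v i) (l i)` over all sign patterns `v`; the list `l` is built by
prepending, so its head is the most recent index. -/
def patterns : List ℕ → Set (Set S)
  | [] => {univ}
  | n :: l => split A B (patterns l) n

theorem split_finite {𝒞 : Set (Set S)} (h𝒞 : 𝒞.Finite) (n : ℕ) : (split A B 𝒞 n).Finite :=
  (h𝒞.prod finite_univ).image _

theorem patterns_finite : ∀ l, (patterns A B l).Finite
  | [] => finite_singleton _
  | n :: l => split_finite A B (patterns_finite l) n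

variable {A B} {M : Set ℕ} {C : Set S} {𝒞 : Set (Set S)}

theorem Tame.mono {M' : Set ℕ} (h : Tame A B M C) (hM : M' ⊆ M) : Tame A B M' C :=
  fun t ht => (h t ht).imp (·.subset fun _ hn => ⟨hM hn.1, hn.2⟩)
    (·.subset fun _ hn => ⟨hM hn.1, hn.2⟩)

theorem Wild.mono {M' : Set ℕ} (h : Wild A B M C) (hM : M' ⊆ M) : Wild A B M' C :=
  fun M'' hM'' => h M'' (hM''.trans hM)

theorem Wild.exists_mem (h : Wild A B M C) (hM : M.Infinite) :
    ∃ t ∈ C, {n | n ∈ M ∧ t ∈ A n}.Infinite ∧ {n | n ∈ M ∧ t ∈ B n}.Infinite := by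
  have h' := h M subset_rfl hM
  simp only [Tame, not_forall, not_or, exists_prop] at h'
  exact h'

theorem not_wild_iff : ¬Wild A B M C ↔ ∃ M' ⊆ M, M'.Infinite ∧ Tame A B M' C := by
  simp [Wild]

theorem exists_subset_tame_or_wild (h𝒞 : 𝒞.Finite) (hM : M.Infinite) :
    ∃ M' ⊆ M, M'.Infinite ∧ ∀ C ∈ 𝒞, Tame A B M' C ∨ Wild A B M' C := by
  induction 𝒞, h𝒞 using Set.Finite.induction_on generalizing M with
  | empty => exact ⟨M, subset_rfl, hM, by simp⟩
  | @insert C 𝒞 _ _ ih =>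
    obtain ⟨M₁, hM₁, hM₁inf, h₁⟩ := ih hM
    by_cases hW : Wild A B M₁ C
    · exact ⟨M₁, hM₁, hM₁inf, forall_mem_insert.2 ⟨Or.inr hW, h₁⟩⟩
    · obtain ⟨M₂, hM₂, hM₂inf, hT⟩ := not_wild_iff.1 hW
      exact ⟨M₂, hM₂.trans hM₁, hM₂inf, forall_mem_insert.2
        ⟨Or.inl hT, fun D hD => (h₁ D hD).imp (·.mono hM₂) (·.mono hM₂)⟩⟩

theorem exists_tame_or_wild_split (h𝒞 : 𝒞.Finite) (hM : M.Infinite) :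
    ∃ n ∈ M, ∃ M' ⊆ M, M'.Infinite ∧ (∀ x ∈ M', n < x) ∧
      ∀ D ∈ split A B 𝒞 n, Tame A B M' D ∨ Wild A B M' D := by
  obtain ⟨n, hn⟩ := hM.nonempty
  obtain ⟨M', hM', hM'inf, h⟩ :=
    exists_subset_tame_or_wild (split_finite A B h𝒞 n) (hM.sdiff (finite_Iic n))
  exact ⟨n, hn, M', hM'.trans sdiff_subset, hM'inf, fun x hx => not_le.1 (hM' hx).2, h⟩

theorem exists_seq_tame_or_wild_split (h𝒞 : 𝒞.Finite) (hM : M.Infinite) :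
    ∃ (n : ℕ → ℕ) (N : ℕ → Set ℕ), StrictMono n ∧ (∀ i j, i < j → n j ∈ N i) ∧
      ∀ j, n j ∈ M ∧ N j ⊆ M ∧ (N j).Infinite ∧ (∀ x ∈ N j, n j < x) ∧
        ∀ D ∈ split A B 𝒞 (n j), Tame A B (N j) D ∨ Wild A B (N j) D := by
  obtain ⟨n₀, hn₀, M₀, hM₀, hM₀inf, hgt₀, h₀⟩ :=
    exists_tame_or_wild_split (A := A) (B := B) h𝒞 hM
  obtain ⟨f, -, hf⟩ := exists_seq_of_forall_exists
    (P := fun s : ℕ × Set ℕ => s.1 ∈ M ∧ s.2 ⊆ M ∧ s.2.Infinite ∧ (∀ x ∈ s.2, s.1 < x) ∧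
      ∀ D ∈ split A B 𝒞 s.1, Tame A B s.2 D ∨ Wild A B s.2 D)
    (R := fun _ s s' => s'.1 ∈ s.2 ∧ s'.2 ⊆ s.2) (s₀ := (n₀, M₀))
    ⟨hn₀, hM₀, hM₀inf, hgt₀, h₀⟩ fun _ s ⟨_, hs, hsinf, _⟩ => by
      obtain ⟨n, hn, M', hM', hM'inf, hgt, h⟩ := exists_tame_or_wild_split h𝒞 hsinf
      exact ⟨(n, M'), ⟨hs hn, hM'.trans hs, hM'inf, hgt, h⟩, hn, hM'⟩
  have hN : Antitone fun j => (f j).2 := antitone_nat_of_succ_le fun j => (hf j).2.2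
  refine ⟨fun j => (f j).1, fun j => (f j).2,
    strictMono_nat_of_lt_succ fun j => (hf j).1.2.2.2.1 _ (hf j).2.1, fun i j hij => ?_,
    fun j => (hf j).1⟩
  obtain ⟨k, rfl⟩ := Nat.exists_eq_add_of_lt hij
  exact hN (Nat.le_add_right i k) (hf (i + k)).2.1

theorem finite_setOf_tame_side {n : ℕ → ℕ} {N : ℕ → Set ℕ} (hn : StrictMono n)
    (hnN : ∀ i j, i < j → n j ∈ N i) (hC : Wild A B (range n) C) (b : Bool) :
    {j | Tame A B (N j) (C ∩ side A B b (n j))}.Finite := by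
  set J := {j | Tame A B (N j) (C ∩ side A B b (n j))}
  by_contra hJ
  obtain ⟨t, htC, hA, hB⟩ :=
    (hC.mono (image_subset_range n J)).exists_mem (Set.Infinite.image hn.injective.injOn hJ)
  have hside : {m | m ∈ n '' J ∧ t ∈ side A B b m}.Infinite := by
    cases b
    exacts [hA, hB]
  obtain ⟨_, ⟨j, hj, rfl⟩, htj⟩ := hside.nonempty
  -- the later indices `n i` all lie in `N j`, so `t` stays wild along `N j`
  have hN : ∀ E : ℕ → Set S, {m | m ∈ n '' J ∧ t ∈ E m}.Infinite →
      {m | m ∈ N j ∧ t ∈ E m}.Infinite := by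
    refine fun E hE => (hE.sdiff (finite_Iic (n j))).mono ?_
    rintro _ ⟨⟨⟨i, -, rfl⟩, hti⟩, hij⟩
    exact ⟨hnN j i (hn.lt_iff_lt.1 (not_le.1 hij)), hti⟩
  exact (hj t ⟨htC, htj⟩).elim (hN A hA) (hN B hB)

theorem exists_wild_split (h𝒞 : 𝒞.Finite) (hM : M.Infinite) (hW : ∀ C ∈ 𝒞, Wild A B M C) :
    ∃ n ∈ M, ∃ M' ⊆ M, M'.Infinite ∧ (∀ x ∈ M', n < x) ∧
      ∀ D ∈ split A B 𝒞 n, Wild A B M' D := by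
  obtain ⟨n, N, hn, hnN, hj⟩ := exists_seq_tame_or_wild_split (A := A) (B := B) h𝒞 hM
  have hbad : (⋃ C ∈ 𝒞, ⋃ b, {j | Tame A B (N j) (C ∩ side A B b (n j))}).Finite :=
    h𝒞.biUnion fun C hC => finite_iUnion fun b => finite_setOf_tame_side hn hnN
      ((hW C hC).mono (range_subset_iff.2 fun j => (hj j).1)) b
  obtain ⟨j, hgood⟩ := hbad.infinite_compl.nonempty
  obtain ⟨hnM, hNM, hNinf, hgt, hdich⟩ := hj j
  refine ⟨n j, hnM, N j, hNM, hNinf, hgt, ?_⟩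
  rintro _ ⟨⟨C, b⟩, ⟨hC, -⟩, rfl⟩
  exact (hdich _ ⟨(C, b), ⟨hC, trivial⟩, rfl⟩).resolve_left
    fun hT => hgood (mem_biUnion hC (mem_iUnion.2 ⟨b, hT⟩))

theorem exists_independent_subseq (hM : M.Infinite) (hW : Wild A B M univ) :
    ∃ m : ℕ → ℕ, StrictMono m ∧ Independent (fun i => A (m i)) (fun i => B (m i)) := by
  obtain ⟨f, hf₀, hf⟩ := exists_seq_of_forall_exists
    (P := fun s : List ℕ × Set ℕ => s.2.Infinite ∧ (∀ x ∈ s.2, ∀ y ∈ s.1, y < x) ∧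
      ∀ D ∈ patterns A B s.1, Wild A B s.2 D)
    (R := fun _ s s' => ∃ n ∈ s.2, s'.1 = n :: s.1) (s₀ := ([], M))
    ⟨hM, by simp, by simpa [patterns]⟩ fun _ s ⟨hs, hlt, hsW⟩ => by
      obtain ⟨n, hn, M', hM', hM'inf, hgt, hW'⟩ :=
        exists_wild_split (patterns_finite A B s.1) hs hsW
      refine ⟨(n :: s.1, M'), ⟨hM'inf, ?_, hW'⟩, n, hn, rfl⟩
      simp only [List.mem_cons, forall_eq_or_imp]
      exact fun x hx => ⟨hgt x hx, hlt x (hM' hx)⟩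
  choose m hmf hm using fun k => (hf k).2
  have hlt : ∀ k, ∀ x ∈ (f k).2, ∀ y ∈ (f k).1, y < x := fun k => (hf k).1.2.1
  have hwild : ∀ k, ∀ D ∈ patterns A B (f k).1, Wild A B (f k).2 D := fun k => (hf k).1.2.2
  refine ⟨m, strictMono_nat_of_lt_succ fun k =>
    hlt (k + 1) _ (hmf (k + 1)) _ (by rw [hm k]; exact List.mem_cons_self), fun k v => ?_⟩
  have hpat : ∀ k, {t | ∀ i < k, t ∈ side A B (v i) (m i)} ∈ patterns A B (f k).1 := by
    intro k
    induction k with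
    | zero => simp [hf₀, patterns]
    | succ k ih =>
      rw [hm k, patterns]
      refine ⟨(_, v k), ⟨ih, trivial⟩, ?_⟩
      ext t
      exact Nat.forall_lt_succ_right.symm
  obtain ⟨t, ht, -⟩ := (hwild k _ (hpat k)).exists_mem (hf k).1.1
  exact ⟨t, ht⟩

variable (F : ℕ → S → ℝ)

theorem exists_wild_levels (hF : ∀ t, ∃ C, ∀ n, |F n t| ≤ C)
    (hconv : ∀ φ : ℕ → ℕ, StrictMono φ → ∃ t, ¬∃ l, Tendsto (fun k => F (φ k) t) atTop (𝓝 l)) :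
    ∃ q r : ℝ, q < r ∧ ∃ M : Set ℕ, M.Infinite ∧
      Wild (fun n => {t | F n t < q}) (fun n => {t | r < F n t}) M univ := by
  by_contra! H
  -- refine along an enumeration `e` of the rational pairs, making each pair tame, then diagonalize
  let e : ℕ ≃ ℚ × ℚ := (Denumerable.eqv (ℚ × ℚ)).symm
  obtain ⟨Ms, -, hMs⟩ := exists_seq_of_forall_exists (P := Set.Infinite)
    (R := fun i M M' => M' ⊆ M ∧ (((e i).1 : ℝ) < (e i).2 →
      Tame (fun n => {t | F n t < (e i).1}) (fun n => {t | ((e i).2 : ℝ) < F n t}) M' univ))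
    infinite_univ fun i M hM => by
      by_cases hqr : ((e i).1 : ℝ) < (e i).2
      · obtain ⟨M', hM', hM'inf, hT⟩ := not_wild_iff.1 (H _ _ hqr M hM)
        exact ⟨M', hM'inf, hM', fun _ => hT⟩
      · exact ⟨M, hM, subset_rfl, fun h => absurd h hqr⟩
  have hanti : Antitone Ms := antitone_nat_of_succ_le fun i => (hMs i).2.1
  obtain ⟨d, hd, hdMs⟩ := extraction_forall_of_frequently fun i =>
    Nat.frequently_atTop_iff_infinite.2 (hMs i).1
  obtain ⟨t, ht⟩ := hconv d hd
  obtain ⟨C, hC⟩ := hF t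
  obtain ⟨q, r, hqr, hq, hr⟩ :=
    exists_rat_frequently_lt_and_gt (a := fun k => F (d k) t) ⟨C, fun k => hC (d k)⟩ ht
  set i := e.symm (q, r)
  have hT := (hMs i).2.2
  simp only [i, Equiv.apply_symm_apply] at hT
  have hinf : ∀ p : ℝ → Prop, (∃ᶠ k in atTop, p (F (d k) t)) →
      {n | n ∈ Ms (i + 1) ∧ p (F n t)}.Infinite := by
    intro p hp
    have hev : ∀ᶠ k in atTop, d k ∈ Ms (i + 1) :=
      eventually_atTop.2 ⟨i + 1, fun k hk => hanti hk (hdMs k)⟩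
    refine ((Nat.frequently_atTop_iff_infinite.1 (hp.and_eventually hev)).image
      hd.injective.injOn).mono ?_
    rintro _ ⟨k, ⟨hpk, hk⟩, rfl⟩
    exact ⟨hk, hpk⟩
  exact (hT (by exact_mod_cast hqr) t trivial).elim (hinf (· < (q : ℝ)) hq) (hinf ((r : ℝ) < ·) hr)

theorem exists_independent_levels (hF : ∀ t, ∃ C, ∀ n, |F n t| ≤ C)
    (hconv : ∀ φ : ℕ → ℕ, StrictMono φ → ∃ t, ¬∃ l, Tendsto (fun k => F (φ k) t) atTop (𝓝 l)) :
    ∃ m : ℕ → ℕ, StrictMono m ∧ ∃ q r : ℝ, q < r ∧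
      Independent (fun i => {t | F (m i) t < q}) (fun i => {t | r < F (m i) t}) := by
  obtain ⟨q, r, hqr, M, hM, hW⟩ := exists_wild_levels F hF hconv
  obtain ⟨m, hm, hind⟩ := exists_independent_subseq hM hW
  exact ⟨m, hm, q, r, hqr, hind⟩

end Rosenthal

section Banach

variable {X : Type*} [NormedAddCommGroup X] [NormedSpace ℝ X]

def HasL1LowerBound (δ : ℝ) (x : ℕ → X) : Prop :=
  ∀ (s : Finset ℕ) (b : ℕ → ℝ), δ * ∑ i ∈ s, |b i| ≤ ‖∑ i ∈ s, b i • x i‖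

theorem weaklyCauchySeq_of_forall_norm_le_one {x : ℕ → X}
    (h : ∀ f : StrongDual ℝ X, ‖f‖ ≤ 1 → ∃ l, Tendsto (fun n => f (x n)) atTop (𝓝 l)) :
    WeaklyCauchySeq x := by
  intro f
  have hc : 0 < ‖f‖ + 1 := by positivity
  obtain ⟨l, hl⟩ := h ((‖f‖ + 1)⁻¹ • f) (by
    rw [norm_smul, norm_inv, Real.norm_of_nonneg hc.le, inv_mul_le_one₀ hc]
    linarith)
  refine ⟨(‖f‖ + 1) * l, ?_⟩
  simpa [← mul_assoc, mul_inv_cancel₀ hc.ne'] using hl.const_mul (‖f‖ + 1)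

theorem hasL1LowerBound_of_independent {x : ℕ → X} {q r : ℝ}
    (h : Rosenthal.Independent (fun i => {f : closedBall (0 : StrongDual ℝ X) 1 | f.1 (x i) < q})
      (fun i => {f | r < f.1 (x i)})) :
    HasL1LowerBound ((r - q) / 2) x := by
  intro s b
  obtain ⟨k, hk⟩ := s.exists_nat_subset_range
  obtain ⟨f₁, hf₁⟩ := h k fun i => decide (0 ≤ b i)
  obtain ⟨f₂, hf₂⟩ := h k fun i => !decide (0 ≤ b i)
  -- `f₁ - f₂` has the sign of `b i` and size at least `r - q` at `x i`
  have hterm : ∀ i ∈ s, (r - q) * |b i| ≤ b i * (f₁.1 - f₂.1) (x i) := by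
    intro i hi
    have h₁ := hf₁ i (Finset.mem_range.1 (hk hi))
    have h₂ := hf₂ i (Finset.mem_range.1 (hk hi))
    by_cases hb : 0 ≤ b i
    · simp only [Rosenthal.side, hb, decide_true, Bool.not_true, if_true, if_false,
        Bool.false_eq_true, Set.mem_ofPred_eq] at h₁ h₂
      rw [abs_of_nonneg hb, sub_apply]
      nlinarith
    · simp only [Rosenthal.side, hb, decide_false, Bool.not_false, if_true, if_false,
        Bool.false_eq_true, Set.mem_ofPred_eq] at h₁ h₂
      rw [abs_of_neg (not_le.1 hb), sub_apply]
      nlinarith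
  have hnorm : ‖f₁.1 - f₂.1‖ ≤ 2 := by
    have h₁ := mem_closedBall_zero_iff.1 f₁.2
    have h₂ := mem_closedBall_zero_iff.1 f₂.2
    linarith [norm_sub_le f₁.1 f₂.1]
  calc (r - q) / 2 * ∑ i ∈ s, |b i| ≤ (f₁.1 - f₂.1) (∑ i ∈ s, b i • x i) / 2 := by
        rw [map_sum, Finset.mul_sum, Finset.sum_div]
        refine Finset.sum_le_sum fun i hi => ?_
        rw [map_smul, smul_eq_mul]
        linarith [hterm i hi]
    _ ≤ ‖f₁.1 - f₂.1‖ * ‖∑ i ∈ s, b i • x i‖ / 2 := by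
        gcongr
        exact (le_abs_self _).trans ((f₁.1 - f₂.1).le_opNorm _)
    _ ≤ ‖∑ i ∈ s, b i • x i‖ := by nlinarith [norm_nonneg (∑ i ∈ s, b i • x i)]

theorem exists_hasL1LowerBound_of_not_weaklyCauchySeq {x : ℕ → X} {C : ℝ}
    (hx : ∀ n, ‖x n‖ ≤ C) (hnc : ∀ φ : ℕ → ℕ, StrictMono φ → ¬WeaklyCauchySeq fun k => x (φ k)) :
    ∃ m : ℕ → ℕ, StrictMono m ∧ ∃ δ > 0, HasL1LowerBound δ fun i => x (m i) := by
  let F : ℕ → closedBall (0 : StrongDual ℝ X) 1 → ℝ := fun n f => f.1 (x n)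
  have hF : ∀ f, ∃ C, ∀ n, |F n f| ≤ C := fun f => ⟨1 * C, fun n =>
    (f.1.le_opNorm (x n)).trans (by gcongr; exacts [mem_closedBall_zero_iff.1 f.2, hx n])⟩
  obtain ⟨m, hm, q, r, hqr, hind⟩ := Rosenthal.exists_independent_levels F hF fun φ hφ => by
    by_contra! H
    exact hnc φ hφ (weaklyCauchySeq_of_forall_norm_le_one fun f hf =>
      H ⟨f, mem_closedBall_zero_iff.2 hf⟩)
  exact ⟨m, hm, (r - q) / 2, half_pos (sub_pos.2 hqr), hasL1LowerBound_of_independent hind⟩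

theorem HasL1LowerBound.linearIndependent {x : ℕ → X} {δ : ℝ} (hx : HasL1LowerBound δ x)
    (hδ : 0 < δ) : LinearIndependent ℝ x := by
  refine linearIndependent_iff'.2 fun s b hb i hi => ?_
  have hsum : ∑ j ∈ s, |b j| = 0 := by
    have := hx s b
    rw [hb, norm_zero] at this
    exact le_antisymm (nonpos_of_mul_nonpos_right this hδ)
      (Finset.sum_nonneg fun _ _ => abs_nonneg _)
  exact abs_eq_zero.1 ((Finset.sum_eq_zero_iff_of_nonneg fun _ _ => abs_nonneg _).1 hsum i hi)

theorem HasL1LowerBound.exists_dual_apply_eq {x : ℕ → X} {δ : ℝ} (hx : HasL1LowerBound δ x)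
    (hδ : 0 < δ) (ε : ℕ → ℝ) (hε : ∀ i, |ε i| ≤ 1) :
    ∃ G : StrongDual ℝ X, ‖G‖ ≤ δ⁻¹ ∧ ∀ i, G (x i) = ε i := by
  have hli := hx.linearIndependent hδ
  let L : Submodule.span ℝ (Set.range x) →ₗ[ℝ] ℝ := Finsupp.linearCombination ℝ ε ∘ₗ hli.repr
  have hL : ∀ w, ‖L w‖ ≤ δ⁻¹ * ‖w‖ := by
    intro w
    set c := hli.repr w
    have hw : (w : X) = ∑ i ∈ c.support, c i • x i := by
      rw [← hli.linearCombination_repr w, Finsupp.linearCombination_apply, Finsupp.sum]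
    calc ‖L w‖ = |∑ i ∈ c.support, c i * ε i| := by
          simp [L, c, Finsupp.linearCombination_apply, Finsupp.sum]
      _ ≤ ∑ i ∈ c.support, |c i| := by
          refine (Finset.abs_sum_le_sum_abs _ _).trans (Finset.sum_le_sum fun i _ => ?_)
          rw [abs_mul]
          exact mul_le_of_le_one_right (abs_nonneg _) (hε i)
      _ ≤ δ⁻¹ * ‖w‖ := by
          rw [le_inv_mul_iff₀ hδ, ← Submodule.norm_coe w, hw]
          exact hx _ _
  obtain ⟨G, hGL, hGn⟩ := exists_extension_norm_eq _ (L.mkContinuous δ⁻¹ hL)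
  refine ⟨G, hGn ▸ L.mkContinuous_norm_le (inv_nonneg.2 hδ.le) hL, fun i => ?_⟩
  have hxi : x i ∈ Submodule.span ℝ (Set.range x) := Submodule.subset_span (Set.mem_range_self i)
  simpa [L, hli.repr_eq_single i ⟨x i, hxi⟩ rfl] using hGL ⟨x i, hxi⟩

def signOf (b : Bool) : ℝ := if b then 1 else -1

theorem abs_signOf (b : Bool) : |signOf b| = 1 := by cases b <;> simp [signOf]

theorem signOf_mul_self (b : Bool) : signOf b * signOf b = 1 := by cases b <;> simp [signOf]

theorem signOf_not (b : Bool) : signOf (!b) = -signOf b := by cases b <;> simp [signOf]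

theorem sum_signOf_mul_signOf {N : ℕ} (a b : Fin N) :
    ∑ w : Fin N → Bool, signOf (w a) * signOf (w b) = if a = b then 2 ^ N else 0 := by
  split_ifs with hab
  · simp [hab, signOf_mul_self]
  · -- flipping the sign at `a` is a bijection negating every term
    have hflip : Function.Involutive fun w : Fin N → Bool => Function.update w a (!w a) := by
      intro w
      ext j
      by_cases hj : j = a
      · subst hj; simp
      · simp [Function.update_of_ne hj]
    have := Equiv.sum_comp (hflip.toPerm _) fun w : Fin N → Bool => signOf (w a) * signOf (w b)
    simp only [Function.Involutive.coe_toPerm, Function.update_self,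
      Function.update_of_ne (Ne.symm hab), signOf_not, neg_mul, Finset.sum_neg_distrib] at this
    linarith

section SignAverage

variable (G : ∀ N, (Fin N → Bool) → StrongDual ℝ X)

def signAverage (N : ℕ) (u v : X) : ℝ :=
  (2 ^ N)⁻¹ * ∑ w, G N w u * G N w v

theorem abs_signAverage_le {C : ℝ} (hG : ∀ N w, ‖G N w‖ ≤ C) (N : ℕ) (u v : X) :
    |signAverage G N u v| ≤ C ^ 2 * (‖u‖ * ‖v‖) := by
  have hterm : ∀ w, |G N w u * G N w v| ≤ C ^ 2 * (‖u‖ * ‖v‖) := fun w => by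
    rw [abs_mul, ← Real.norm_eq_abs, ← Real.norm_eq_abs]
    calc ‖G N w u‖ * ‖G N w v‖ ≤ (C * ‖u‖) * (C * ‖v‖) :=
          mul_le_mul ((G N w).le_of_opNorm_le (hG N w) u) ((G N w).le_of_opNorm_le (hG N w) v)
            (norm_nonneg _) (le_trans (norm_nonneg _) ((G N w).le_of_opNorm_le (hG N w) u))
      _ = C ^ 2 * (‖u‖ * ‖v‖) := by ring
  calc |signAverage G N u v| ≤ (2 ^ N)⁻¹ * ∑ w : Fin N → Bool, C ^ 2 * (‖u‖ * ‖v‖) := by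
        rw [signAverage, abs_mul, abs_of_pos (by positivity)]
        gcongr
        exact (Finset.abs_sum_le_sum_abs _ _).trans (Finset.sum_le_sum fun w _ => hterm w)
    _ = C ^ 2 * (‖u‖ * ‖v‖) := by simp

theorem signAverage_add_left (N : ℕ) (u u' v : X) :
    signAverage G N (u + u') v = signAverage G N u v + signAverage G N u' v := by
  simp only [signAverage, map_add, add_mul, Finset.sum_add_distrib, mul_add]

theorem signAverage_smul_left (N : ℕ) (c : ℝ) (u v : X) :
    signAverage G N (c • u) v = c * signAverage G N u v := by
  simp only [signAverage, map_smul, smul_eq_mul, mul_assoc, ← Finset.mul_sum]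
  ring

theorem signAverage_comm (N : ℕ) (u v : X) : signAverage G N u v = signAverage G N v u := by
  simp only [signAverage, mul_comm (G N _ u)]

theorem signAverage_self_nonneg (N : ℕ) (u : X) : 0 ≤ signAverage G N u u :=
  mul_nonneg (by positivity) (Finset.sum_nonneg fun _ _ => mul_self_nonneg _)

theorem signAverage_apply_of_lt {x : ℕ → X}
    (hGx : ∀ N w (i : Fin N), G N w (x i) = signOf (w i)) {N a b : ℕ} (ha : a < N) (hb : b < N) :
    signAverage G N (x a) (x b) = if a = b then 1 else 0 := by
  have := sum_signOf_mul_signOf (⟨a, ha⟩ : Fin N) ⟨b, hb⟩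
  simp only [Fin.mk.injEq, ← hGx N _ ⟨a, ha⟩, ← hGx N _ ⟨b, hb⟩] at this
  rw [signAverage, this]
  split_ifs <;> simp

theorem exists_bilinear_orthonormal {x : ℕ → X} {C : ℝ} (hG : ∀ N w, ‖G N w‖ ≤ C)
    (hGx : ∀ N w (i : Fin N), G N w (x i) = signOf (w i)) :
    ∃ β : X →ₗ[ℝ] X →ₗ[ℝ] ℝ, (∀ u v, |β u v| ≤ C ^ 2 * (‖u‖ * ‖v‖)) ∧
      (∀ u v, β u v = β v u) ∧ (∀ u, 0 ≤ β u u) ∧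
      ∀ a b, β (x a) (x b) = if a = b then 1 else 0 := by
  let K : Set (X → X → ℝ) := Set.univ.pi fun u => Set.univ.pi fun v =>
    Set.Icc (-(C ^ 2 * (‖u‖ * ‖v‖))) (C ^ 2 * (‖u‖ * ‖v‖))
  have hK : IsCompact K := isCompact_univ_pi fun _ => isCompact_univ_pi fun _ => isCompact_Icc
  obtain ⟨β, hβK, hβ⟩ := hK.exists_mapClusterPt (f := atTop) (u := signAverage G) <|
    le_principal_iff.2 <| mem_map.2 <| univ_mem' fun N u _ v _ =>
      abs_le.1 (abs_signAverage_le G hG N u v)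
  have hlim : ∀ s : Set (X → X → ℝ), IsClosed s → (∀ᶠ N in atTop, signAverage G N ∈ s) → β ∈ s :=
    fun s hs => hs.mem_of_mapClusterPt hβ
  have hadd : ∀ u u' v, β (u + u') v = β u v + β u' v := fun u u' v =>
    hlim {β | β (u + u') v = β u v + β u' v} (isClosed_eq (by fun_prop) (by fun_prop))
      (Eventually.of_forall fun N => signAverage_add_left G N u u' v)
  have hsmul : ∀ (c : ℝ) u v, β (c • u) v = c * β u v := fun c u v =>
    hlim {β | β (c • u) v = c * β u v} (isClosed_eq (by fun_prop) (by fun_prop))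
      (Eventually.of_forall fun N => signAverage_smul_left G N c u v)
  have hcomm : ∀ u v, β u v = β v u := fun u v =>
    hlim {β | β u v = β v u} (isClosed_eq (by fun_prop) (by fun_prop))
      (Eventually.of_forall fun N => signAverage_comm G N u v)
  have hpos : ∀ u, 0 ≤ β u u := fun u =>
    hlim {β | 0 ≤ β u u} (isClosed_le continuous_const (by fun_prop))
      (Eventually.of_forall fun N => signAverage_self_nonneg G N u)
  have horth : ∀ a b, β (x a) (x b) = if a = b then 1 else 0 := fun a b =>
    hlim {β | β (x a) (x b) = if a = b then 1 else 0} (isClosed_eq (by fun_prop) continuous_const)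
      (eventually_atTop.2 ⟨max a b + 1, fun N hN =>
        signAverage_apply_of_lt G hGx (by omega) (by omega)⟩)
  refine ⟨LinearMap.mk₂ ℝ β hadd hsmul (fun u v v' => by rw [hcomm, hadd, hcomm v, hcomm v'])
    (fun c u v => by rw [hcomm, hsmul, hcomm, smul_eq_mul]), fun u v => ?_, hcomm, hpos, horth⟩
  exact abs_le.2 (hβK u trivial v trivial)

end SignAverage

theorem sum_sq_le_of_orthonormal {ι : Type*} [DecidableEq ι] (β : X →ₗ[ℝ] X →ₗ[ℝ] ℝ)
    (hcomm : ∀ u v, β u v = β v u) (hpos : ∀ u, 0 ≤ β u u) {x : ι → X}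
    (hx : ∀ a b, β (x a) (x b) = if a = b then 1 else 0) (u : X) (s : Finset ι) :
    ∑ i ∈ s, β u (x i) ^ 2 ≤ β u u := by
  set w := ∑ i ∈ s, β u (x i) • x i
  have hxw : ∀ j ∈ s, β (x j) w = β u (x j) := fun j hj => by
    simp [w, map_sum, hx, hj]
  have huw : β u w = ∑ i ∈ s, β u (x i) ^ 2 := by
    simp [w, map_sum, sq]
  have hww : β w w = ∑ i ∈ s, β u (x i) ^ 2 := by
    have hβw : β w = ∑ j ∈ s, β u (x j) • β (x j) := by simp only [w, map_sum, map_smul]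
    rw [hβw, LinearMap.sum_apply]
    exact Finset.sum_congr rfl fun j hj => by rw [LinearMap.smul_apply, hxw j hj, smul_eq_mul, sq]
  have := hpos (u - w)
  simp only [map_sub, LinearMap.sub_apply, hcomm w u, huw, hww] at this
  linarith

theorem HasL1LowerBound.exists_clm_lp_two_apply_eq_single {x : ℕ → X} {δ : ℝ}
    (hx : HasL1LowerBound δ x) (hδ : 0 < δ) :
    ∃ J : X →L[ℝ] lp (fun _ : ℕ => ℝ) 2, ∀ i, J (x i) = lp.single 2 i 1 := by
  choose G hGn hGx using fun N (w : Fin N → Bool) =>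
    hx.exists_dual_apply_eq hδ (fun i => if h : i < N then signOf (w ⟨i, h⟩) else 0)
      fun i => by split_ifs <;> simp [abs_signOf]
  obtain ⟨β, hβ, hcomm, hpos, horth⟩ :=
    exists_bilinear_orthonormal G hGn fun N w i => by rw [hGx, dif_pos i.2]
  have hsum : ∀ u (s : Finset ℕ),
      ∑ i ∈ s, ‖β u (x i)‖ ^ (2 : ℝ≥0∞).toReal ≤ (δ⁻¹ * ‖u‖) ^ (2 : ℝ≥0∞).toReal := by
    intro u s
    simp only [toReal_ofNat, Real.rpow_two, Real.norm_eq_abs, sq_abs]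
    calc ∑ i ∈ s, β u (x i) ^ 2 ≤ β u u := sum_sq_le_of_orthonormal β hcomm hpos horth u s
      _ ≤ |β u u| := le_abs_self _
      _ ≤ (δ⁻¹ * ‖u‖) ^ 2 := (hβ u u).trans_eq (by ring)
  let J : X →ₗ[ℝ] lp (fun _ : ℕ => ℝ) 2 :=
    { toFun u := ⟨fun i => β u (x i), memℓp_gen' (hsum u)⟩
      map_add' u v := by ext i; exact congr($(map_add β u v) (x i))
      map_smul' c u := by ext i; exact congr($(map_smul β c u) (x i)) }
  refine ⟨J.mkContinuous δ⁻¹ fun u =>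
    lp.norm_le_of_forall_sum_le (by norm_num) (by positivity) (hsum u), fun i => ?_⟩
  ext j
  simp [J, horth, lp.single_apply, Pi.single_apply, eq_comm]

end Banach

theorem lp.continuous_linearMapOfLE {α : Type*} {E : α → Type*} [∀ i, NormedAddCommGroup (E i)]
    [∀ i, NormedSpace ℝ (E i)] [∀ i, CompleteSpace (E i)] {p q : ℝ≥0∞} [Fact (1 ≤ p)]
    [Fact (1 ≤ q)] (h : p ≤ q) : Continuous (lp.linearMapOfLE ℝ E h) :=
  (lp.linearMapOfLE ℝ E h).continuous_of_seq_closed_graph fun _ a g hfa hfg =>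
    lp.ext <| tendsto_nhds_unique (lp.uniformContinuous_coe.continuous.tendsto g |>.comp hfg)
      (lp.uniformContinuous_coe.continuous.tendsto a |>.comp hfa)

theorem lp.not_tendsto_single {α : Type*} [DecidableEq α] {p : ℝ≥0∞} [Fact (1 ≤ p)]
    {φ : ℕ → α} (hφ : Function.Injective φ) (a : lp (fun _ : α => ℝ) p) :
    ¬Tendsto (fun k => lp.single p (φ k) (1 : ℝ)) atTop (𝓝 a) := by
  intro hlim
  obtain ⟨N, hN⟩ := Metric.cauchySeq_iff'.1 hlim.cauchySeq 1 one_pos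
  have hp : p ≠ 0 := (zero_lt_one.trans_le Fact.out).ne'
  have hne : φ (N + 1) ≠ φ N := hφ.ne (Nat.succ_ne_self N)
  have := lp.norm_apply_le_norm hp
    (lp.single p (φ (N + 1)) (1 : ℝ) - lp.single p (φ N) (1 : ℝ) : lp (fun _ : α => ℝ) p) (φ N)
  simp [lp.single_apply, hne.symm] at this
  linarith [dist_eq_norm (lp.single p (φ (N + 1)) (1 : ℝ) : lp (fun _ : α => ℝ) p)
    (lp.single p (φ N) (1 : ℝ)) ▸ hN (N + 1) N.le_succ]

theorem stmt_6_general {X Y : Type*} [NormedAddCommGroup X] [NormedSpace ℝ X]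
    [NormedAddCommGroup Y] [NormedSpace ℝ Y]
    (p : ℝ≥0∞) (hp : 2 < p) [Fact (1 ≤ p)] (T : Y →L[ℝ] X)
    (h : ∀ J : X →L[ℝ] lp (fun _ : ℕ => ℝ) p, IsCompactOperator (J.comp T)) :
    WeaklyPrecompactOp T := by
  intro x hx
  by_contra! hnc
  choose y hy hyx using hx
  obtain ⟨m, hm, δ, hδ, hl1⟩ := exists_hasL1LowerBound_of_not_weaklyCauchySeq
    (fun n => hyx n ▸ T.le_opNorm_of_le (mem_closedBall_zero_iff.1 (hy n))) hnc
  obtain ⟨J, hJ⟩ := hl1.exists_clm_lp_two_apply_eq_single hδ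
  let Jp : X →L[ℝ] lp (fun _ : ℕ => ℝ) p :=
    ⟨lp.linearMapOfLE ℝ _ hp.le, lp.continuous_linearMapOfLE hp.le⟩ ∘L J
  obtain ⟨K, hK, hTK⟩ := (h Jp).image_closedBall_subset_compact 1
  obtain ⟨a, -, ψ, hψ, hlim⟩ := hK.tendsto_subseq (x := fun k => Jp (x (m k)))
    fun k => hTK ⟨y (m k), hy _, by simp [hyx]⟩
  refine lp.not_tendsto_single hψ.injective a ?_
  convert hlim using 2 with k
  ext i
  simp [Jp, hJ]

/-- For `2 < p < ∞`, if `T : Y → X` is an operator between Banach spaces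
such that `J ∘ T : Y → ℓ_p` is compact for every operator `J : X → ℓ_p`, then `T`
is weakly precompact. -/
theorem stmt_6 {X Y : Type*} [NormedAddCommGroup X] [NormedSpace ℝ X] [CompleteSpace X]
    [NormedAddCommGroup Y] [NormedSpace ℝ Y] [CompleteSpace Y]
    (p : ℝ≥0∞) (hp : 2 < p) (hp' : p ≠ ⊤) [Fact (1 ≤ p)] (T : Y →L[ℝ] X)
    (h : ∀ J : X →L[ℝ] lp (fun _ : ℕ => ℝ) p, IsCompactOperator (J.comp T)) :
    WeaklyPrecompactOp T :=
  stmt_6_general p hp T h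
end
end

section
/- Let 2 < p < ∞. If T: Y → X is an operator between Banach spaces whose adjoint T*: X* → Y* is p-convergent, then T is weakly precompact. -/
open Filter Topology Metric NormedSpace Bornology ENNReal

noncomputable section

/-!
Suppose `T` is not weakly precompact: some `(y n)` in the unit ball has no subsequence with
`(T (y n))` weakly Cauchy. By Rosenthal's dichotomy, a consequence of the Nash-Williams theorem, a
subsequence is `(r, s)`-independent on the dual unit ball: for each finite sign pattern `σ`, some
`t_σ` with `‖t_σ‖ ≤ 1` is `≥ s` at the points where `σ` is `true` and `≤ r` at the others.
Averaging the `t_σ` against Rademacher signs and taking a weak* cluster point gives functionals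
`g n` with `‖∑ aₙ • g n‖ ≤ (∑ aₙ²)^(1/2)`. They are therefore weakly 2-summable, hence weakly
`p`-summable for `p ≥ 2`, while `g n (T (y n)) ≥ (s - r) / 2`. So `‖T* (g n)‖` does not tend to `0`.
-/

namespace NashWilliams

/-- `M / F` in the usual notation. -/
def tailAbove (M : Set ℕ) (F : Finset ℕ) : Set ℕ := {x ∈ M | ∀ y ∈ F, y < x}

lemma tailAbove_subset (M : Set ℕ) (F : Finset ℕ) : tailAbove M F ⊆ M := Set.sep_subset _ _

@[simp] lemma tailAbove_empty (M : Set ℕ) : tailAbove M ∅ = M := by simp [tailAbove]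

lemma tailAbove_infinite {M : Set ℕ} (hM : M.Infinite) (F : Finset ℕ) :
    (tailAbove M F).Infinite :=
  (hM.sdiff (Set.finite_Iic (F.sup id))).mono fun _ hx =>
    ⟨hx.1, fun _ hy => (Finset.le_sup (f := id) hy).trans_lt (not_le.1 hx.2)⟩

lemma exists_subset_image_range {u : ℕ → ℕ} (hu : StrictMono u) {F : Finset ℕ}
    (hF : ↑F ⊆ Set.range u) :
    ∃ k, F ⊆ (Finset.range k).image u ∧ tailAbove (Set.range u) F ⊆ u '' Set.Ici k := by
  classical
  induction F using Finset.induction_on with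
  | empty => exact ⟨0, by simp, by simp⟩
  | insert a F _ ih =>
    rw [Finset.coe_insert, Set.insert_subset_iff] at hF
    obtain ⟨⟨j, rfl⟩, hF⟩ := hF
    obtain ⟨k, hk, hk'⟩ := ih hF
    refine ⟨max k (j + 1), Finset.insert_subset ?_ (hk.trans ?_), ?_⟩
    · exact Finset.mem_image.2 ⟨j, by simp, rfl⟩
    · exact Finset.image_subset_image (Finset.range_subset_range.2 (le_max_left _ _))
    · rintro _ ⟨⟨i, rfl⟩, hi⟩
      obtain ⟨i', hi', hii'⟩ := hk' ⟨⟨i, rfl⟩, fun y hy => hi y (Finset.mem_insert_of_mem hy)⟩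
      have : j < i := hu.lt_iff_lt.1 (hi _ (Finset.mem_insert_self _ _))
      exact ⟨i, max_le (hu.injective hii' ▸ Set.mem_Ici.1 hi') this, rfl⟩

variable {Φ : Finset ℕ → Set ℕ → Prop}

lemma exists_subset_forall_mem_finset (hmono : ∀ F {R R' : Set ℕ}, R' ⊆ R → Φ F R → Φ F R')
    (hdense : ∀ F {R : Set ℕ}, R.Infinite → ∃ R' ⊆ R, R'.Infinite ∧ Φ F R')
    (s : Finset (Finset ℕ)) {R : Set ℕ} (hR : R.Infinite) :
    ∃ R' ⊆ R, R'.Infinite ∧ ∀ F ∈ s, Φ F R' := by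
  classical
  induction s using Finset.induction_on with
  | empty => exact ⟨R, subset_rfl, hR, by simp⟩
  | insert F s _ ih =>
    obtain ⟨R₁, hR₁, hR₁inf, h₁⟩ := ih
    obtain ⟨R₂, hR₂, hR₂inf, h₂⟩ := hdense F hR₁inf
    refine ⟨R₂, hR₂.trans hR₁, hR₂inf, Finset.forall_mem_insert .. |>.2
      ⟨h₂, fun G hG => hmono G hR₂ (h₁ G hG)⟩⟩

theorem exists_subset_forall_tailAbove (hmono : ∀ F {R R' : Set ℕ}, R' ⊆ R → Φ F R → Φ F R')
    (hdense : ∀ F {R : Set ℕ}, R.Infinite → ∃ R' ⊆ R, R'.Infinite ∧ Φ F R')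
    {N : Set ℕ} (hN : N.Infinite) :
    ∃ M ⊆ N, M.Infinite ∧ ∀ F : Finset ℕ, ↑F ⊆ M → Φ F (tailAbove M F) := by
  classical
  have hstep : ∀ (C : Finset ℕ) (R : Set ℕ), R.Infinite → ∃ R' ⊆ tailAbove R {sInf R},
      R'.Infinite ∧ ∀ G ∈ (insert (sInf R) C).powerset, Φ G R' := fun C R hR =>
    exists_subset_forall_mem_finset hmono hdense _ (tailAbove_infinite hR _)
  choose! next hnext_sub hnext_inf hnext using hstep
  obtain ⟨R₀, hR₀N, hR₀inf, hR₀⟩ := hdense ∅ hN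
  -- stage `k`: the first `k` points of `M` and the reservoir for the later ones
  let st : ℕ → Finset ℕ × Set ℕ := fun k =>
    Nat.rec (∅, R₀) (fun _ p => (insert (sInf p.2) p.1, next p.1 p.2)) k
  set u : ℕ → ℕ := fun k => sInf (st k).2
  have hinv : ∀ k, (st k).2.Infinite ∧ ∀ G ⊆ (st k).1, Φ G (st k).2 := by
    intro k
    induction k with
    | zero => exact ⟨hR₀inf, fun G hG => Finset.subset_empty.1 hG ▸ hR₀⟩
    | succ k ih =>
      exact ⟨hnext_inf _ _ ih.1, fun G hG => hnext _ _ ih.1 G (Finset.mem_powerset.2 hG)⟩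
  have hmem : ∀ k, u k ∈ (st k).2 := fun k => Nat.sInf_mem (hinv k).1.nonempty
  have hsucc : ∀ k, (st (k + 1)).2 ⊆ tailAbove (st k).2 {u k} := fun k =>
    hnext_sub _ _ (hinv k).1
  have hanti : Antitone fun k => (st k).2 :=
    antitone_nat_of_succ_le fun k => (hsucc k).trans (tailAbove_subset _ _)
  have hu : StrictMono u := strictMono_nat_of_lt_succ fun k =>
    (hsucc k (hmem (k + 1))).2 _ (Finset.mem_singleton_self _)
  have hC : ∀ k, (st k).1 = (Finset.range k).image u := by
    intro k
    induction k with
    | zero => rfl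
    | succ k ih => rw [Finset.range_add_one, Finset.image_insert, ← ih]
  refine ⟨Set.range u, ?_, Set.infinite_range_of_injective hu.injective, fun F hF => ?_⟩
  · rintro _ ⟨k, rfl⟩
    exact hR₀N (hanti (Nat.zero_le k) (hmem k))
  · obtain ⟨k, hFk, htail⟩ := exists_subset_image_range hu hF
    refine hmono F (htail.trans ?_) ((hinv k).2 F (hC k ▸ hFk))
    rintro _ ⟨j, hj, rfl⟩
    exact hanti hj (hmem j)

theorem exists_subset_forall_finset {S : Finset ℕ → Prop} {M : Set ℕ} (hM : M.Infinite)
    (h₀ : S ∅)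
    (hext : ∀ G : Finset ℕ, ↑G ⊆ M → S G → {n ∈ tailAbove M G | ¬ S (insert n G)}.Finite) :
    ∃ M' ⊆ M, M'.Infinite ∧ ∀ F : Finset ℕ, ↑F ⊆ M' → S F := by
  classical
  obtain ⟨M', hM'M, hM'inf, hM'⟩ := exists_subset_forall_tailAbove
    (Φ := fun G R => ↑G ⊆ M → S G → ∀ n ∈ R, n ∈ tailAbove M G → S (insert n G))
    (fun G R R' hR' h hGM hG n hn => h hGM hG n (hR' hn))
    (fun G R hR => by
      by_cases h : ↑G ⊆ M ∧ S G
      · refine ⟨R \ {n ∈ tailAbove M G | ¬ S (insert n G)}, Set.sdiff_subset,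
          hR.sdiff (hext G h.1 h.2), fun _ _ n hn hnG => ?_⟩
        by_contra hS
        exact hn.2 ⟨hnG, hS⟩
      · exact ⟨R, subset_rfl, hR, fun hGM hG => absurd ⟨hGM, hG⟩ h⟩) hM
  refine ⟨M', hM'M, hM'inf, fun F hF => ?_⟩
  induction F using Finset.induction_on_max with
  | empty => exact h₀
  | insert a G hlt ih =>
    rw [Finset.coe_insert, Set.insert_subset_iff] at hF
    exact hM' G hF.2 (hF.2.trans hM'M) (ih hF.2) a ⟨hF.1, hlt⟩ ⟨hM'M hF.1, hlt⟩

variable (Fam : Finset ℕ → Prop)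

-- Initial segments of infinite subsets of `M` are encoded as the prefixes of strictly increasing
-- sequences in `M`.
def Accepts (M : Set ℕ) (F : Finset ℕ) : Prop :=
  ∀ v : ℕ → ℕ, StrictMono v → (∀ j, v j ∈ M) → ∃ k, Fam (F ∪ (Finset.range k).image v)

def Rejects (M : Set ℕ) (F : Finset ℕ) : Prop :=
  ∀ P ⊆ M, P.Infinite → ¬ Accepts Fam P F

variable {Fam}

lemma Accepts.mono {M M' : Set ℕ} {F : Finset ℕ} (h : M' ⊆ M) (hM : Accepts Fam M F) :
    Accepts Fam M' F := fun v hv hvM => hM v hv fun j => h (hvM j)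

lemma Rejects.mono {M M' : Set ℕ} {F : Finset ℕ} (h : M' ⊆ M) (hM : Rejects Fam M F) :
    Rejects Fam M' F := fun P hP => hM P (hP.trans h)

lemma accepts_of_fam {F : Finset ℕ} (h : Fam F) (M : Set ℕ) : Accepts Fam M F :=
  fun _ _ _ => ⟨0, by simpa using h⟩

lemma exists_subset_accepts_or_rejects (F : Finset ℕ) {N : Set ℕ} (hN : N.Infinite) :
    ∃ M ⊆ N, M.Infinite ∧ (Accepts Fam M F ∨ Rejects Fam M F) := by
  by_cases h : Rejects Fam N F
  · exact ⟨N, subset_rfl, hN, Or.inr h⟩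
  · simp only [Rejects, not_forall, not_not] at h
    obtain ⟨P, hPN, hP, hacc⟩ := h
    exact ⟨P, hPN, hP, Or.inl hacc⟩

lemma image_range_succ (v : ℕ → ℕ) (k : ℕ) :
    (Finset.range (k + 1)).image v = insert (v 0) ((Finset.range k).image fun j => v (j + 1)) := by
  rw [Finset.range_add_one', Finset.image_insert, Finset.map_eq_image, Finset.image_image]
  rfl

lemma finite_setOf_accepts_insert {M : Set ℕ} {G : Finset ℕ}
    (hrej : Rejects Fam (tailAbove M G) G) :
    {n ∈ tailAbove M G | Accepts Fam (tailAbove M (insert n G)) (insert n G)}.Finite := by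
  by_contra hinf
  -- that infinite set would accept `G`: split off the first term of each sequence in it
  refine hrej _ (Set.sep_subset _ _) hinf fun v hv hvP => ?_
  obtain ⟨k, hk⟩ := (hvP 0).2 (fun j => v (j + 1)) (fun a b h => hv (Nat.succ_lt_succ h))
    fun j => ⟨(hvP (j + 1)).1.1, Finset.forall_mem_insert .. |>.2
      ⟨hv (Nat.succ_pos j), (hvP (j + 1)).1.2⟩⟩
  exact ⟨k + 1, by rwa [image_range_succ, Finset.union_insert, ← Finset.insert_union]⟩

theorem exists_subset_dichotomy (Fam : Finset ℕ → Prop) {N : Set ℕ} (hN : N.Infinite) :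
    ∃ M ⊆ N, M.Infinite ∧
      ((∀ v : ℕ → ℕ, StrictMono v → (∀ j, v j ∈ M) → ∃ k, Fam ((Finset.range k).image v)) ∨
        ∀ F : Finset ℕ, ↑F ⊆ M → ¬ Fam F) := by
  obtain ⟨M, hMN, hMinf, hdec⟩ := exists_subset_forall_tailAbove
    (Φ := fun F R => Accepts Fam R F ∨ Rejects Fam R F)
    (fun F R R' h => Or.imp (Accepts.mono h) (Rejects.mono h))
    (fun F R hR => exists_subset_accepts_or_rejects F hR) hN
  rcases tailAbove_empty M ▸ hdec ∅ (by simp) with hacc | hrej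
  · exact ⟨M, hMN, hMinf, Or.inl fun v hv hvM => by simpa using hacc v hv hvM⟩
  obtain ⟨M', hM'M, hM'inf, hM'⟩ := exists_subset_forall_finset
    (S := fun F => Rejects Fam (tailAbove M F) F) hMinf (by simpa using hrej)
    fun G hGM hG => (finite_setOf_accepts_insert hG).subset fun n ⟨hn, hnrej⟩ =>
      ⟨hn, (hdec _ (by simpa using Set.insert_subset hn.1 hGM)).resolve_right hnrej⟩
  exact ⟨M', hM'M.trans hMN, hM'inf, Or.inr fun F hF hFam =>
    hM' F hF _ subset_rfl (tailAbove_infinite hMinf F) (accepts_of_fam hFam _)⟩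

end NashWilliams

section Rosenthal

open Finset

variable {K : Type*}

def IsIndependent (f : ℕ → K → ℝ) (r s : ℝ) : Prop :=
  ∀ (m : ℕ) (σ : Fin m → Bool), ∃ k, ∀ i : Fin m,
    (σ i = true → s ≤ f i k) ∧ (σ i = false → f i k ≤ r)

def AlternatesOn (f : ℕ → K → ℝ) (r s : ℝ) (F : Finset ℕ) : Prop :=
  ∃ k, ∀ n ∈ F, (Even #{j ∈ F | j < n} → s ≤ f n k) ∧ (Odd #{j ∈ F | j < n} → f n k ≤ r)

lemma card_filter_lt_image_range {v : ℕ → ℕ} (hv : StrictMono v) {l L : ℕ} (hl : l ≤ L) :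
    #{j ∈ (range L).image v | j < v l} = l := by
  rw [filter_image, card_image_of_injective _ hv.injective]
  convert card_range l using 2
  ext j
  simp only [mem_filter, mem_range, hv.lt_iff_lt]
  omega

variable {f : ℕ → K → ℝ} {r s : ℝ}

lemma alternatesOn_image_range {v : ℕ → ℕ} (hv : StrictMono v) {k : K}
    (h : ∀ l, (Even l → s ≤ f (v l) k) ∧ (Odd l → f (v l) k ≤ r)) (L : ℕ) :
    AlternatesOn f r s ((range L).image v) := ⟨k, by
  simp only [mem_image, mem_range, forall_exists_index, and_imp]
  rintro _ l hl rfl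
  rw [card_filter_lt_image_range hv hl.le]
  exact h l⟩

-- Block `i` of the image of `c` is `{3i, 3i+1}` or `{3i+1, 3i+2}`, chosen so that `3i+1` gets
-- an even rank exactly when `σ i`.
lemma exists_strictMono_even_iff (m : ℕ) (σ : Fin m → Bool) :
    ∃ c : ℕ → ℕ, StrictMono c ∧
      ∀ i : Fin m, ∃ l < 2 * m, c l = 3 * i + 1 ∧ (Even l ↔ σ i = true) := by
  set β : ℕ → ℕ := fun i => if h : i < m then (if σ ⟨i, h⟩ then 1 else 0) else 0
  have hβ : ∀ i, β i ≤ 1 := fun i => by simp only [β]; split_ifs <;> simp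
  refine ⟨fun l => 3 * (l / 2) + l % 2 + β (l / 2), strictMono_nat_of_lt_succ fun l => ?_,
    fun i => ?_⟩
  · have h₁ := hβ (l / 2)
    have h₂ := hβ ((l + 1) / 2)
    rcases Nat.mod_two_eq_zero_or_one l with hl | hl
    · rw [show (l + 1) / 2 = l / 2 by omega]
      omega
    · omega
  · have hβi : β i = if σ i then 1 else 0 := by simp [β]
    have := i.isLt
    cases hσ : σ i
    · refine ⟨2 * i + 1, by omega, ?_, by simp [parity_simps]⟩
      simp only [show (2 * (i : ℕ) + 1) / 2 = i by omega, hβi, hσ, Bool.false_eq_true, if_false]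
      omega
    · refine ⟨2 * i, by omega, ?_, by simp⟩
      simp only [show 2 * (i : ℕ) / 2 = i by omega, hβi, hσ, if_true]
      omega

lemma exists_isIndependent_of_forall_alternatesOn {M : Set ℕ} (hM : M.Infinite)
    (h : ∀ F : Finset ℕ, ↑F ⊆ M → AlternatesOn f r s F) :
    ∃ φ : ℕ → ℕ, StrictMono φ ∧ IsIndependent (fun n => f (φ n)) r s := by
  set e := Nat.nth (· ∈ M)
  have he : StrictMono e := Nat.nth_strictMono hM
  refine ⟨fun i => e (3 * i + 1), he.comp fun a b hab => by omega, fun m σ => ?_⟩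
  obtain ⟨c, hc, hcσ⟩ := exists_strictMono_even_iff m σ
  obtain ⟨k, hk⟩ := h ((range (2 * m)).image (e ∘ c)) <| by
    simp only [coe_image, Set.image_subset_iff]
    exact fun l _ => Nat.nth_mem_of_infinite hM _
  refine ⟨k, fun i => ?_⟩
  obtain ⟨l, hl, hcl, hpar⟩ := hcσ i
  have := hk _ (mem_image_of_mem _ (mem_range.2 hl))
  rw [card_filter_lt_image_range (he.comp hc) hl.le, Function.comp_apply, hcl] at this
  refine ⟨fun hσ => this.1 (hpar.2 hσ), fun hσ => this.2 ?_⟩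
  rw [← Nat.not_even_iff_odd, hpar, hσ]
  simp

lemma exists_rat_frequently_of_not_tendsto {a : ℕ → ℝ} {C : ℝ} (hC : ∀ n, |a n| ≤ C)
    (h : ∀ l, ¬ Tendsto a atTop (𝓝 l)) :
    ∃ r s : ℚ, r < s ∧ (∃ᶠ n in atTop, (s : ℝ) < a n) ∧ ∃ᶠ n in atTop, a n < r := by
  have hbdd : IsBoundedUnder (· ≤ ·) atTop a :=
    isBoundedUnder_of ⟨C, fun n => (abs_le.1 (hC n)).2⟩
  have hbdd' : IsBoundedUnder (· ≥ ·) atTop a :=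
    isBoundedUnder_of ⟨-C, fun n => (abs_le.1 (hC n)).1⟩
  have hlt : liminf a atTop < limsup a atTop :=
    (liminf_le_limsup hbdd hbdd').lt_of_ne fun heq =>
      h _ (tendsto_of_liminf_eq_limsup heq rfl hbdd hbdd')
  obtain ⟨r, hr₁, hr₂⟩ := exists_rat_btwn hlt
  obtain ⟨s, hs₁, hs₂⟩ := exists_rat_btwn hr₂
  exact ⟨r, s, by exact_mod_cast hs₁, frequently_lt_of_lt_limsup hbdd'.isCoboundedUnder_le hs₂,
    frequently_lt_of_liminf_lt hbdd.isCoboundedUnder_ge hr₁⟩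

lemma exists_strictMono_forall_tail {ι : Type*} [Countable ι] [Nonempty ι]
    {A : ι → Set ℕ → Prop} (hmono : ∀ i {M N : Set ℕ}, M ⊆ N → A i N → A i M)
    (hdense : ∀ i {N : Set ℕ}, N.Infinite → ∃ M ⊆ N, M.Infinite ∧ A i M) :
    ∃ d : ℕ → ℕ, StrictMono d ∧ ∀ i, ∃ k, A i (Set.range fun j => d (k + j)) := by
  obtain ⟨e, he⟩ := exists_surjective_nat ι
  choose! next hnext_sub hnext_inf hnext using
    fun n (N : Set ℕ) (hN : N.Infinite) => hdense (e n) hN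
  let R : ℕ → Set ℕ := fun n => Nat.rec Set.univ (fun n N => next n N) n
  have hinf : ∀ n, (R n).Infinite := fun n => by
    induction n with
    | zero => exact Set.infinite_univ
    | succ n ih => exact hnext_inf n _ ih
  have hanti : Antitone R := antitone_nat_of_succ_le fun n => hnext_sub n _ (hinf n)
  obtain ⟨d, hd, hdR⟩ := extraction_forall_of_frequently fun n =>
    Nat.frequently_atTop_iff_infinite.2 (hinf (n + 1))
  refine ⟨d, hd, fun i => ?_⟩
  obtain ⟨n, rfl⟩ := he i
  exact ⟨n, hmono _ (Set.range_subset_iff.2 fun j =>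
    hanti (show n + 1 ≤ n + j + 1 by omega) (hdR (n + j)))
    (hnext n _ (hinf n))⟩

lemma exists_strictMono_alternating {a : ℕ → ℝ} {r s : ℝ} (hs : ∃ᶠ n in atTop, s < a n)
    (hr : ∃ᶠ n in atTop, a n < r) (n : ℕ) :
    ∃ J : ℕ → ℕ, StrictMono J ∧ ∀ l, n ≤ J l ∧ (Even l → s ≤ a (J l)) ∧ (Odd l → a (J l) ≤ r) :=
  extraction_forall_of_frequently (P := fun l j =>
      n ≤ j ∧ (Even l → s ≤ a j) ∧ (Odd l → a j ≤ r)) fun l => by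
    rcases Nat.even_or_odd l with hl | hl
    · exact (hs.and_eventually (eventually_ge_atTop n)).mono fun j hj =>
        ⟨hj.2, fun _ => hj.1.le, fun ho => absurd hl (Nat.not_even_iff_odd.2 ho)⟩
    · exact (hr.and_eventually (eventually_ge_atTop n)).mono fun j hj =>
        ⟨hj.2, fun he => absurd he (Nat.not_even_iff_odd.2 hl), fun _ => hj.1.le⟩

def BlocksAlternation (f : ℕ → K → ℝ) (r s : ℝ) (M : Set ℕ) : Prop :=
  ∀ v : ℕ → ℕ, StrictMono v → (∀ j, v j ∈ M) → ∃ L, ¬ AlternatesOn f r s ((range L).image v)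

lemma BlocksAlternation.mono {M N : Set ℕ} (h : M ⊆ N) (hN : BlocksAlternation f r s N) :
    BlocksAlternation f r s M := fun v hv hvM => hN v hv fun j => h (hvM j)

lemma exists_blocksAlternation_or_isIndependent {N : Set ℕ} (hN : N.Infinite) :
    (∃ M ⊆ N, M.Infinite ∧ BlocksAlternation f r s M) ∨
      ∃ φ : ℕ → ℕ, StrictMono φ ∧ IsIndependent (fun n => f (φ n)) r s := by
  obtain ⟨M, hMN, hM, hdich | hdich⟩ :=
    NashWilliams.exists_subset_dichotomy (fun F => ¬ AlternatesOn f r s F) hN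
  · exact Or.inl ⟨M, hMN, hM, hdich⟩
  · exact Or.inr (exists_isIndependent_of_forall_alternatesOn hM fun F hF => not_not.1 (hdich F hF))

theorem exists_isIndependent_of_not_tendsto (hb : ∀ k, ∃ C, ∀ n, |f n k| ≤ C)
    (h : ¬ ∃ φ : ℕ → ℕ, StrictMono φ ∧ ∀ k, ∃ l, Tendsto (fun j => f (φ j) k) atTop (𝓝 l)) :
    ∃ r s : ℝ, r < s ∧ ∃ φ : ℕ → ℕ, StrictMono φ ∧ IsIndependent (fun n => f (φ n)) r s := by
  by_contra hind
  obtain ⟨d, hd, hA⟩ := exists_strictMono_forall_tail (ι := ℚ × ℚ)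
    (A := fun q M => (q.1 : ℝ) < q.2 → BlocksAlternation f q.1 q.2 M)
    (fun q M N hMN hN hq => (hN hq).mono hMN)
    (fun q N hN => by
      by_cases hq : (q.1 : ℝ) < q.2
      · obtain ⟨M, hMN, hM, hblock⟩ | hφ := exists_blocksAlternation_or_isIndependent hN
        · exact ⟨M, hMN, hM, fun _ => hblock⟩
        · exact (hind ⟨_, _, hq, hφ⟩).elim
      · exact ⟨N, subset_rfl, hN, fun hq' => absurd hq' hq⟩)
  -- along `d` every rational window blocks alternation, so no `f (d j) k` can oscillate
  refine h ⟨d, hd, fun k => by_contra fun hconv => ?_⟩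
  obtain ⟨C, hC⟩ := hb k
  obtain ⟨r, s, hrs, hs, hr⟩ :=
    exists_rat_frequently_of_not_tendsto (fun j => hC (d j)) (not_exists.1 hconv)
  obtain ⟨n, hn⟩ := hA (r, s)
  obtain ⟨J, hJ, hJn⟩ := exists_strictMono_alternating hs hr n
  obtain ⟨L, hL⟩ := hn (by exact_mod_cast hrs) (fun l => d (J l)) (hd.comp hJ)
    fun l => ⟨J l - n, by simp only [Nat.add_sub_cancel' (hJn l).1]⟩
  exact hL (alternatesOn_image_range (hd.comp hJ) (fun l => (hJn l).2) L)

end Rosenthal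

section Rademacher

open Finset

def rademacher {m : ℕ} (n : ℕ) (σ : Fin m → Bool) : ℝ :=
  if h : n < m then (if σ ⟨n, h⟩ then 1 else -1) else 0

variable {m n n' : ℕ}

lemma rademacher_coe_fin (i : Fin m) (σ : Fin m → Bool) :
    rademacher i σ = if σ i then 1 else -1 := by
  simp [rademacher]

lemma sum_eq_zero_of_flip (i : Fin m) {g : (Fin m → Bool) → ℝ}
    (hg : ∀ σ, g (Function.update σ i (!σ i)) = -g σ) : ∑ σ, g σ = 0 := by
  have hinv : Function.Involutive fun σ : Fin m → Bool => Function.update σ i (!σ i) :=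
    fun σ => by simp
  have := Equiv.sum_comp hinv.toPerm g
  simp only [Function.Involutive.coe_toPerm, hg, sum_neg_distrib] at this
  linarith

lemma rademacher_update_self (hn : n < m) (σ : Fin m → Bool) :
    rademacher n (Function.update σ ⟨n, hn⟩ (!σ ⟨n, hn⟩)) = -rademacher n σ := by
  cases h : σ ⟨n, hn⟩ <;> simp [rademacher, hn, h]

lemma rademacher_update_of_ne (hn : n < m) (hne : n' ≠ n) (σ : Fin m → Bool) (b : Bool) :
    rademacher n' (Function.update σ ⟨n, hn⟩ b) = rademacher n' σ := by
  by_cases h : n' < m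
  · have : (⟨n', h⟩ : Fin m) ≠ ⟨n, hn⟩ := by simp [hne]
    simp only [rademacher, dif_pos h, Function.update_of_ne this]
  · simp [rademacher, h]

lemma rademacher_mul_self (hn : n < m) (σ : Fin m → Bool) :
    rademacher n σ * rademacher n σ = 1 := by
  unfold rademacher
  split_ifs <;> norm_num

lemma sum_rademacher (hn : n < m) : ∑ σ : Fin m → Bool, rademacher n σ = 0 :=
  sum_eq_zero_of_flip ⟨n, hn⟩ (rademacher_update_self hn)

lemma sum_rademacher_mul (hn : n < m) (hn' : n' < m) :
    ∑ σ : Fin m → Bool, rademacher n σ * rademacher n' σ = if n = n' then 2 ^ m else 0 := by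
  split_ifs with h
  · subst h
    simp [rademacher_mul_self hn]
  · refine sum_eq_zero_of_flip ⟨n, hn⟩ fun σ => ?_
    rw [rademacher_update_self, rademacher_update_of_ne hn (Ne.symm h), neg_mul]

lemma sum_sq_sum_mul_rademacher {F : Finset ℕ} (hF : ∀ n ∈ F, n < m) (a : ℕ → ℝ) :
    ∑ σ : Fin m → Bool, (∑ n ∈ F, a n * rademacher n σ) ^ 2 = 2 ^ m * ∑ n ∈ F, a n ^ 2 := by
  calc _ = ∑ n ∈ F, ∑ n' ∈ F,
        a n * a n' * ∑ σ : Fin m → Bool, rademacher n σ * rademacher n' σ := by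
        simp_rw [sq, sum_mul_sum, mul_sum]
        rw [sum_comm]
        refine sum_congr rfl fun n _ => ?_
        rw [sum_comm]
        refine sum_congr rfl fun n' _ => sum_congr rfl fun σ _ => ?_
        ring
    _ = _ := by
        rw [mul_sum]
        refine sum_congr rfl fun n hn => ?_
        rw [sum_congr rfl fun n' hn' => by rw [sum_rademacher_mul (hF n hn) (hF n' hn')]]
        simp [hn, sq, mul_comm]

lemma le_sum_rademacher_mul {r s : ℝ} (i : Fin m) {w : (Fin m → Bool) → ℝ}
    (hw : ∀ σ, (σ i = true → s ≤ w σ) ∧ (σ i = false → w σ ≤ r)) :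
    2 ^ m * ((s - r) / 2) ≤ ∑ σ, rademacher i σ * w σ := by
  -- pointwise `ε w ≥ (s - r) / 2 + ε (s + r) / 2`, and the Rademacher sum of the second term is `0`
  have key : ∀ σ, (s - r) / 2 + (s + r) / 2 * rademacher i σ ≤ rademacher i σ * w σ := fun σ => by
    rw [rademacher_coe_fin]
    cases h : σ i
    · rw [if_neg Bool.false_ne_true]
      linarith [(hw σ).2 h]
    · rw [if_pos rfl]
      linarith [(hw σ).1 h]
  calc 2 ^ m * ((s - r) / 2)
      = ∑ σ : Fin m → Bool, ((s - r) / 2 + (s + r) / 2 * rademacher i σ) := by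
        rw [sum_add_distrib, ← mul_sum, sum_rademacher i.isLt]
        simp
    _ ≤ _ := sum_le_sum fun σ _ => key σ

variable {E : Type*} [NormedAddCommGroup E] [NormedSpace ℝ E]

def rademacherAverage (t : (Fin m → Bool) → E) (n : ℕ) : E :=
  (2 ^ m : ℝ)⁻¹ • ∑ σ, rademacher n σ • t σ

lemma norm_sum_smul_rademacherAverage_le {t : (Fin m → Bool) → E} (ht : ∀ σ, ‖t σ‖ ≤ 1)
    {F : Finset ℕ} (hF : ∀ n ∈ F, n < m) (a : ℕ → ℝ) :
    ‖∑ n ∈ F, a n • rademacherAverage t n‖ ≤ √(∑ n ∈ F, a n ^ 2) := by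
  set c : (Fin m → Bool) → ℝ := fun σ => ∑ n ∈ F, a n * rademacher n σ
  have hsum : ∑ n ∈ F, a n • rademacherAverage t n = (2 ^ m : ℝ)⁻¹ • ∑ σ, c σ • t σ := by
    simp only [rademacherAverage, smul_sum, c, sum_smul, smul_smul]
    rw [sum_comm]
    refine sum_congr rfl fun σ _ => sum_congr rfl fun n _ => ?_
    ring_nf
  have hc : ∑ σ, |c σ| ≤ 2 ^ m * √(∑ n ∈ F, a n ^ 2) := by
    rw [← Real.sqrt_sq (by positivity : (0 : ℝ) ≤ 2 ^ m), ← Real.sqrt_mul (by positivity)]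
    refine Real.le_sqrt_of_sq_le ?_
    calc (∑ σ, |c σ|) ^ 2 ≤ #(univ : Finset (Fin m → Bool)) * ∑ σ, |c σ| ^ 2 :=
          sq_sum_le_card_mul_sum_sq
      _ = _ := by
          simp only [sq_abs, c, sum_sq_sum_mul_rademacher hF, card_univ, Fintype.card_fun,
            Fintype.card_bool, Fintype.card_fin]
          push_cast
          ring
  calc ‖∑ n ∈ F, a n • rademacherAverage t n‖
      ≤ (2 ^ m : ℝ)⁻¹ * ∑ σ, |c σ| := by
        rw [hsum, norm_smul, Real.norm_of_nonneg (by positivity)]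
        gcongr
        refine (norm_sum_le _ _).trans (sum_le_sum fun σ _ => ?_)
        rw [norm_smul, Real.norm_eq_abs]
        exact mul_le_of_le_one_right (abs_nonneg _) (ht σ)
    _ ≤ (2 ^ m : ℝ)⁻¹ * (2 ^ m * √(∑ n ∈ F, a n ^ 2)) := by gcongr
    _ = √(∑ n ∈ F, a n ^ 2) := by field_simp

end Rademacher

section DualBall

variable {X Y : Type*} [NormedAddCommGroup X] [NormedSpace ℝ X]
  [NormedAddCommGroup Y] [NormedSpace ℝ Y]

def onDualBall (x : ℕ → X) (n : ℕ) (t : closedBall (0 : StrongDual ℝ X) 1) : ℝ :=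
  (t : StrongDual ℝ X) (x n)

lemma weaklyCauchySeq_of_forall_closedBall {x : ℕ → X}
    (h : ∀ t, ∃ l, Tendsto (fun n => onDualBall x n t) atTop (𝓝 l)) : WeaklyCauchySeq x := by
  intro f
  have hc : 0 < ‖f‖ + 1 := by positivity
  obtain ⟨l, hl⟩ := h ⟨(‖f‖ + 1)⁻¹ • f, by
    rw [mem_closedBall_zero_iff, norm_smul, norm_inv, Real.norm_of_nonneg hc.le,
      inv_mul_le_iff₀ hc]
    linarith⟩
  refine ⟨(‖f‖ + 1) * l, (hl.const_mul (‖f‖ + 1)).congr fun n => ?_⟩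
  simp [onDualBall, ← mul_assoc, mul_inv_cancel₀ hc.ne']

theorem exists_isIndependent_of_not_weaklyCauchySeq {x : ℕ → X} {C : ℝ} (hC : ∀ n, ‖x n‖ ≤ C)
    (h : ¬ ∃ φ : ℕ → ℕ, StrictMono φ ∧ WeaklyCauchySeq fun k => x (φ k)) :
    ∃ r s : ℝ, r < s ∧ ∃ φ : ℕ → ℕ, StrictMono φ ∧
      IsIndependent (onDualBall fun n => x (φ n)) r s :=
  exists_isIndependent_of_not_tendsto (f := onDualBall x)
    (fun t => ⟨C, fun n => by
      rw [onDualBall, ← Real.norm_eq_abs]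
      exact ((t : StrongDual ℝ X).le_opNorm _).trans
        (mul_le_of_le_one_left (norm_nonneg _) (mem_closedBall_zero_iff.1 t.2) |>.trans (hC n))⟩)
    fun ⟨φ, hφ, hconv⟩ => h ⟨φ, hφ, weaklyCauchySeq_of_forall_closedBall hconv⟩

lemma exists_tendsto_apply_of_eventually_norm_le {ι : Type*} (U : Ultrafilter ι)
    {G : ι → StrongDual ℝ X} {C : ℝ} (hG : ∀ᶠ i in U, ‖G i‖ ≤ C) :
    ∃ g : StrongDual ℝ X, ∀ x, Tendsto (fun i => G i x) U (𝓝 (g x)) := by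
  obtain ⟨g, -, hg⟩ := (WeakDual.isCompact_closedBall (𝕜 := ℝ) (E := X) 0 C).ultrafilter_le_nhds
    (U.map (StrongDual.toWeakDual ∘ G)) <| by
      rw [Ultrafilter.coe_map, le_principal_iff, mem_map]
      exact hG.mono fun i hi => by simpa using hi
  exact ⟨WeakDual.toStrongDual g, fun x => ((WeakDual.eval_continuous x).tendsto g).comp hg⟩

lemma ContinuousLinearMap.opNorm_le_of_tendsto {ι : Type*} {l : Filter ι} [l.NeBot]
    {G : ι → X →L[ℝ] Y} {g : X →L[ℝ] Y} {C : ℝ}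
    (hg : ∀ x, Tendsto (fun i => G i x) l (𝓝 (g x))) (hG : ∀ᶠ i in l, ‖G i‖ ≤ C) : ‖g‖ ≤ C := by
  obtain ⟨i, hi⟩ := hG.exists
  exact g.opNorm_le_bound ((norm_nonneg _).trans hi) fun x =>
    le_of_tendsto (hg x).norm (hG.mono fun i hi => (G i).le_of_opNorm_le hi x)

lemma le_rademacherAverage_apply {m : ℕ} {t : (Fin m → Bool) → StrongDual ℝ X} {r s : ℝ}
    (i : Fin m) {z : X} (ht : ∀ σ, (σ i = true → s ≤ t σ z) ∧ (σ i = false → t σ z ≤ r)) :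
    (s - r) / 2 ≤ rademacherAverage t i z := by
  simp only [rademacherAverage, smul_apply, sum_apply, smul_eq_mul]
  rw [le_inv_mul_iff₀ (by positivity)]
  exact le_sum_rademacher_mul i ht

lemma weaklyPSummable_two_of_norm_sum_smul_le {E : Type*} [NormedAddCommGroup E]
    [NormedSpace ℝ E] {g : ℕ → E} {C : ℝ}
    (hg : ∀ (F : Finset ℕ) (a : ℕ → ℝ), ‖∑ n ∈ F, a n • g n‖ ≤ C * √(∑ n ∈ F, a n ^ 2)) :
    WeaklyPSummable 2 g := by
  intro Φ
  have hpart : ∀ F : Finset ℕ, ∑ n ∈ F, Φ (g n) ^ 2 ≤ (‖Φ‖ * C) ^ 2 := by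
    intro F
    set S := ∑ n ∈ F, Φ (g n) ^ 2
    have hS : √S * √S ≤ ‖Φ‖ * C * √S := calc
      √S * √S = Φ (∑ n ∈ F, Φ (g n) • g n) := by
        rw [Real.mul_self_sqrt (by positivity)]
        simp [S, sq]
      _ ≤ ‖Φ‖ * ‖∑ n ∈ F, Φ (g n) • g n‖ := (le_abs_self _).trans (Φ.le_opNorm _)
      _ ≤ ‖Φ‖ * (C * √S) := by gcongr; exact hg F _
      _ = ‖Φ‖ * C * √S := by ring
    rw [← Real.sq_sqrt (by positivity : 0 ≤ S)]
    nlinarith [sq_nonneg (‖Φ‖ * C - √S), Real.sqrt_nonneg S]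
  refine memℓp_gen ?_
  simp only [ENNReal.toReal_ofNat, Real.rpow_two, Real.norm_eq_abs, sq_abs]
  exact summable_of_sum_le (fun n => sq_nonneg _) hpart

theorem exists_weaklyPSummable_two_of_isIndependent {z : ℕ → X} {r s : ℝ}
    (hz : IsIndependent (onDualBall z) r s) :
    ∃ g : ℕ → StrongDual ℝ X, WeaklyPSummable 2 g ∧ ∀ n, (s - r) / 2 ≤ g n (z n) := by
  choose t ht using hz
  set G : ℕ → ℕ → StrongDual ℝ X := fun m => rademacherAverage fun σ => (t m σ : StrongDual ℝ X)
  have htn : ∀ m σ, ‖(t m σ : StrongDual ℝ X)‖ ≤ 1 := fun m σ =>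
    mem_closedBall_zero_iff.1 (t m σ).2
  set U := Ultrafilter.of (atTop : Filter ℕ)
  have hU : ∀ n, ∀ᶠ m in (U : Filter ℕ), n < m := fun n =>
    Ultrafilter.of_le _ (eventually_gt_atTop n)
  have hG : ∀ n, ∀ᶠ m in (U : Filter ℕ), ‖G m n‖ ≤ 1 := fun n => (hU n).mono fun m hm => by
    simpa using norm_sum_smul_rademacherAverage_le (htn m) (F := {n}) (by simpa using hm) 1
  choose g hg using fun n => exists_tendsto_apply_of_eventually_norm_le U (hG n)
  refine ⟨g, weaklyPSummable_two_of_norm_sum_smul_le (C := 1) fun F a => ?_, fun n => ?_⟩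
  · rw [one_mul]
    refine ContinuousLinearMap.opNorm_le_of_tendsto (l := (U : Filter ℕ))
      (G := fun m => ∑ n ∈ F, a n • G m n) (fun x => ?_) ?_
    · simpa using tendsto_finsetSum F fun n _ => (hg n x).const_mul (a n)
    · filter_upwards [(F.eventually_all (p := fun n m => n < m)).2 fun n _ => hU n] with m hm
      exact norm_sum_smul_rademacherAverage_le (htn m) hm a
  · exact ge_of_tendsto (hg n (z n)) ((hU n).mono fun m hm =>
      le_rademacherAverage_apply ⟨n, hm⟩ (ht m · ⟨n, hm⟩))

theorem not_pConvergent_adjOp_of_isIndependent {p : ℝ≥0∞} (hp : 2 ≤ p) (T : Y →L[ℝ] X)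
    {y : ℕ → Y} (hy : ∀ n, ‖y n‖ ≤ 1) {r s : ℝ} (hrs : r < s)
    (hind : IsIndependent (onDualBall fun n => T (y n)) r s) : ¬ PConvergent p (adjOp T) := by
  intro hT
  obtain ⟨g, hg, hgy⟩ := exists_weaklyPSummable_two_of_isIndependent hind
  have hlow : ∀ n, (s - r) / 2 ≤ ‖adjOp T (g n)‖ := fun n => calc
    (s - r) / 2 ≤ adjOp T (g n) (y n) := hgy n
    _ ≤ ‖adjOp T (g n) (y n)‖ := le_abs_self _
    _ ≤ ‖adjOp T (g n)‖ * ‖y n‖ := (adjOp T (g n)).le_opNorm _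
    _ ≤ ‖adjOp T (g n)‖ := mul_le_of_le_one_right (norm_nonneg _) (hy n)
  have := ge_of_tendsto' (hT g fun Φ => (hg Φ).of_exponent_ge hp) hlow
  linarith

end DualBall

theorem stmt_7_general {X Y : Type*} [NormedAddCommGroup X] [NormedSpace ℝ X]
    [NormedAddCommGroup Y] [NormedSpace ℝ Y]
    (p : ℝ≥0∞) (hp : 2 < p) (T : Y →L[ℝ] X)
    (h : PConvergent p (adjOp T)) :
    WeaklyPrecompactOp T := by
  intro x hx
  choose y hy hyx using hx
  obtain rfl : (fun n => T (y n)) = x := funext hyx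
  replace hy : ∀ n, ‖y n‖ ≤ 1 := fun n => mem_closedBall_zero_iff.1 (hy n)
  by_contra hx
  obtain ⟨r, s, hrs, φ, hφ, hind⟩ := exists_isIndependent_of_not_weaklyCauchySeq
    (fun n => T.le_opNorm_of_le (hy n) |>.trans (mul_one _).le) hx
  exact not_pConvergent_adjOp_of_isIndependent hp.le T (fun n => hy (φ n)) hrs hind h

/-- For `2 < p < ∞`, if `T : Y → X` is an operator between Banach spaces
whose adjoint `T* : X* → Y*` is `p`-convergent, then `T` is weakly precompact. -/
theorem stmt_7 {X Y : Type*} [NormedAddCommGroup X] [NormedSpace ℝ X] [CompleteSpace X]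
    [NormedAddCommGroup Y] [NormedSpace ℝ Y] [CompleteSpace Y]
    (p : ℝ≥0∞) (hp : 2 < p) (hp' : p ≠ ⊤) (T : Y →L[ℝ] X)
    (h : PConvergent p (adjOp T)) :
    WeaklyPrecompactOp T :=
  stmt_7_general p hp T h
end
end
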